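/- arXiv:1303.7429 — 11 statements merged into one kernel-verified Lean document; each statement's English description precedes it below -/
import Mathlib

section
/- Let A be a countable relational structure. Then the following are equivalent: (i) for every m, the set of relations ρ ⊆ (Fin m → A) that are invariant under all polymorphisms of A is finite; (ii) for every m, the set of relations ρ ⊆ (Fin m → A) that are invariant under all endomorphisms of A is finite (i.e. A is weakly oligomorphic). -/
open FirstOrder FirstOrder.Language FirstOrder.Language.Structure CategoryTheory

universe u v w w' w'' w'''

/-- A first-order homomorphism is an embedding if it agrees pointwise with some embedding. -/
def IsHomEmbedding {L : FirstOrder.Language} {M N : Type*} [L.Structure M] [L.Structure N]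
    (f : M →[L] N) : Prop :=
  ∃ e : M ↪[L] N, ∀ x, e x = f x

/-- A structure is weakly oligomorphic if for every arity `n` there are only finitely many
relations on `n`-tuples invariant under all endomorphisms. -/
def WeaklyOligomorphic (L : FirstOrder.Language) (M : Type*) [L.Structure M] : Prop :=
  ∀ n : ℕ, {ρ : Set (Fin n → M) | ∀ f : M →[L] M, ∀ a ∈ ρ, f ∘ a ∈ ρ}.Finite

/-- A structure is homomorphism-homogeneous if every homomorphism from a finite substructure
into the structure extends to an endomorphism. -/
def HomHomogeneous (L : FirstOrder.Language) (M : Type*) [L.Structure M] : Prop :=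
  ∀ S : L.Substructure M, (S : Set M).Finite →
    ∀ f : S →[L] M, ∃ g : M →[L] M, ∀ x : S, g (x : M) = f x

/-- A structure is weakly homomorphism-homogeneous if for finite substructures `B ≤ C`, every
homomorphism from `B` into the structure extends to a homomorphism from `C`. -/
def WeaklyHomHomogeneous (L : FirstOrder.Language) (M : Type*) [L.Structure M] : Prop :=
  ∀ (B C : L.Substructure M) (h : B ≤ C), (C : Set M).Finite →
    ∀ f : B →[L] M, ∃ g : C →[L] M, ∀ x : B, g (Substructure.inclusion h x) = f x

/-- The age of a structure: the class of all finite structures embeddable into it. -/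
def Age.{u₁, v₁, w₁, w₂} (L : FirstOrder.Language.{u₁, v₁}) (M : Type w₂) [L.Structure M] :
    Set (Bundled.{w₁} L.Structure) :=
  {N | Finite N ∧ Nonempty (N ↪[L] M)}

/-- A class of structures projects onto another if every member of the first admits a
homomorphism to some member of the second. -/
def ProjectsOnto (L : FirstOrder.Language.{u, v}) (C D : Set (Bundled.{w} L.Structure)) : Prop :=
  ∀ A ∈ C, ∃ B ∈ D, Nonempty (A →[L] B)

/-- The hereditary property: a class is closed under (isomorphic copies of) substructures of
its members, i.e. closed under embeddability. -/
def HasHP (L : FirstOrder.Language.{u, v}) (C : Set (Bundled.{w} L.Structure)) : Prop :=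
  ∀ A ∈ C, ∀ B : Bundled.{w} L.Structure, Nonempty (B ↪[L] A) → B ∈ C

/-- The joint embedding property. -/
def HasJEP (L : FirstOrder.Language.{u, v}) (C : Set (Bundled.{w} L.Structure)) : Prop :=
  ∀ A ∈ C, ∀ B ∈ C, ∃ D ∈ C, Nonempty (A ↪[L] D) ∧ Nonempty (B ↪[L] D)

/-- The amalgamation property. -/
def HasAP (L : FirstOrder.Language.{u, v}) (C : Set (Bundled.{w} L.Structure)) : Prop :=
  ∀ A ∈ C, ∀ B₁ ∈ C, ∀ B₂ ∈ C, ∀ (f₁ : A ↪[L] B₁) (f₂ : A ↪[L] B₂),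
    ∃ D ∈ C, ∃ (g₁ : B₁ ↪[L] D) (g₂ : B₂ ↪[L] D), ∀ a, g₁ (f₁ a) = g₂ (f₂ a)

/-- The homo-amalgamation property: for every homomorphism `f₁ : A → B₁` and every embedding
`f₂ : A ↪ B₂` within the class there are `D` in the class, an embedding `g₁ : B₁ ↪ D` and a
homomorphism `g₂ : B₂ → D` with `g₁ ∘ f₁ = g₂ ∘ f₂`. -/
def HasHAP (L : FirstOrder.Language.{u, v}) (C : Set (Bundled.{w} L.Structure)) : Prop :=
  ∀ A ∈ C, ∀ B₁ ∈ C, ∀ B₂ ∈ C, ∀ (f₁ : A →[L] B₁) (f₂ : A ↪[L] B₂),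
    ∃ D ∈ C, ∃ (g₁ : B₁ ↪[L] D) (g₂ : B₂ →[L] D), ∀ a, g₁ (f₁ a) = g₂ (f₂ a)

/-- Closure under isomorphism. -/
def IsoClosed (L : FirstOrder.Language.{u, v}) (C : Set (Bundled.{w} L.Structure)) : Prop :=
  ∀ A ∈ C, ∀ B : Bundled.{w} L.Structure, Nonempty (A ≃[L] B) → B ∈ C

/-- A structure is hom-irreducible in a class if every homomorphism from it to a member of
the class is an embedding. -/
def HomIrreducibleIn (L : FirstOrder.Language.{u, v}) (C : Set (Bundled.{w} L.Structure))
    (A : Type*) [L.Structure A] : Prop :=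
  ∀ B ∈ C, ∀ f : A →[L] B, IsHomEmbedding f

/-- `CA L M` is the class of all finite structures in the age of `M` that are hom-irreducible
in the age of `M`. -/
def CA.{u₁, v₁, w₁, w₂} (L : FirstOrder.Language.{u₁, v₁}) (M : Type w₂) [L.Structure M] :
    Set (Bundled.{w₁} L.Structure) :=
  {B | B ∈ Age.{u₁, v₁, w₁, w₂} L M ∧
    HomIrreducibleIn.{u₁, v₁, w₁, w₁} L (Age.{u₁, v₁, w₁, w₂} L M) B}

/-- `M ⪯_h N` : the age of `N` is contained in the age of `M`, and for all finite
substructures `A ≤ B` of `M`, every homomorphism from `A` to `N` extends to `B`. -/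
def PrecH.{u₁, v₁, w₁, w₂, w₃} (L : FirstOrder.Language.{u₁, v₁}) (M : Type w₂) (N : Type w₃)
    [L.Structure M] [L.Structure N] : Prop :=
  Age.{u₁, v₁, w₁, w₃} L N ⊆ Age.{u₁, v₁, w₁, w₂} L M ∧
  ∀ (A B : L.Substructure M) (h : A ≤ B), (B : Set M).Finite →
    ∀ f : A →[L] N, ∃ g : B →[L] N, ∀ x : A, g (Substructure.inclusion h x) = f x

/-- A structure is (ultra)homogeneous if every isomorphism between finite substructures
(i.e. every embedding of a finite substructure into the structure) extends to an
automorphism. -/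
def Ultrahomogeneous (L : FirstOrder.Language) (M : Type*) [L.Structure M] : Prop :=
  ∀ S : L.Substructure M, (S : Set M).Finite →
    ∀ f : S ↪[L] M, ∃ g : M ≃[L] M, ∀ x : S, g (x : M) = f x

/-- A structure is oligomorphic if for every `n` its automorphism group has finitely many
orbits on `n`-tuples. -/
def Oligomorphic (L : FirstOrder.Language) (M : Type*) [L.Structure M] : Prop :=
  ∀ n : ℕ, ∃ S : Set (Fin n → M), S.Finite ∧
    ∀ a : Fin n → M, ∃ b ∈ S, ∃ g : M ≃[L] M, (fun i => g (b i)) = a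

/-- A structure is a core if every endomorphism is an embedding. -/
def IsCore (L : FirstOrder.Language) (M : Type*) [L.Structure M] : Prop :=
  ∀ f : M →[L] M, IsHomEmbedding f

/-- A substructure `C` is a core of `M` if `C` is a core and some endomorphism of `M` has
image contained in `C`. -/
def IsCoreOf (L : FirstOrder.Language) (M : Type*) [L.Structure M]
    (C : L.Substructure M) : Prop :=
  IsCore L C ∧ ∃ f : M →[L] M, ∀ x, f x ∈ C

/-- The constraint satisfaction problem of `M`: the class of all finite structures admitting
a homomorphism to `M`. -/
def CSP.{u₁, v₁, w₁, w₂} (L : FirstOrder.Language.{u₁, v₁}) (M : Type w₂) [L.Structure M] :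
    Set (Bundled.{w₁} L.Structure) :=
  {C | Finite C ∧ Nonempty (C →[L] M)}

/-- `f` is an `n`-ary polymorphism of `M`, i.e. a homomorphism from the `n`-th direct power
of `M` to `M`. -/
def IsPolymorphism (L : FirstOrder.Language) {M : Type*} [L.Structure M] {n : ℕ}
    (f : (Fin n → M) → M) : Prop :=
  ∀ {m : ℕ} (R : L.Relations m) (x : Fin n → Fin m → M),
    (∀ j, RelMap R (x j)) → RelMap R (fun i => f (fun j => x j i))

section aux
variable {L : FirstOrder.Language.{u, v}} [L.IsRelational] {M : Type w'} [L.Structure M]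

/-- Composing a polymorphism with a tuple of endomorphisms gives an endomorphism. -/
def polyCompHom {n : ℕ} (f : (Fin n → M) → M) (hf : IsPolymorphism L f)
    (g : Fin n → (M →[L] M)) : M →[L] M where
  toFun x := f (fun j => g j x)
  map_fun' := fun F _ => isEmptyElim F
  map_rel' := fun R x hx => hf R (fun j i => g j (x i)) (fun j => (g j).map_rel R x hx)

set_option linter.unusedSectionVars false in
/-- A unary function induced by an endomorphism is a polymorphism. -/
theorem hom_isPolymorphism (f : M →[L] M) :
    IsPolymorphism L (fun x : Fin 1 → M => f (x 0)) :=
  fun R x hx => f.map_rel R (x 0) (hx 0)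

end aux

/-- For a countable relational structure, having only finitely many relations of
each arity invariant under all polymorphisms is equivalent to weak oligomorphy (finitely many
relations of each arity invariant under all endomorphisms). -/
theorem stmt0 (L : FirstOrder.Language.{u, v}) [L.IsRelational]
    (M : Type w') [L.Structure M] [Countable M] :
    (∀ m : ℕ, {ρ : Set (Fin m → M) |
        ∀ (n : ℕ) (f : (Fin n → M) → M), IsPolymorphism L f →
          ∀ a : Fin n → Fin m → M, (∀ j, a j ∈ ρ) → (fun i => f fun j => a j i) ∈ ρ}.Finite)
      ↔ WeaklyOligomorphic L M := by
  constructor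
  · intro hpoly m
    have hP := hpoly m
    -- the endomorphism-orbit closure of a tuple
    set E : (Fin m → M) → Set (Fin m → M) :=
      fun a => {b | ∃ g : M →[L] M, b = g ∘ a} with hE
    -- each `E a` is invariant under all polymorphisms
    have hEpoly : ∀ a : Fin m → M, E a ∈ {ρ : Set (Fin m → M) |
        ∀ (n : ℕ) (f : (Fin n → M) → M), IsPolymorphism L f →
          ∀ c : Fin n → Fin m → M, (∀ j, c j ∈ ρ) → (fun i => f fun j => c j i) ∈ ρ} := by
      intro a n f hf c hc
      choose g hg using hc
      refine ⟨polyCompHom f hf g, funext fun i => ?_⟩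
      show f (fun j => c j i) = f (fun j => g j (a i))
      congr 1
      funext j
      exact congrFun (hg j) i
    refine Set.Finite.subset (hP.finite_subsets.image Set.sUnion) ?_
    intro ρ hρ
    refine ⟨{s | ∃ a ∈ ρ, s = E a}, ?_, ?_⟩
    · rintro s ⟨a, _, rfl⟩
      exact hEpoly a
    · ext b
      constructor
      · rintro ⟨s, ⟨a, ha, rfl⟩, g, rfl⟩
        exact hρ g a ha
      · intro hb
        exact ⟨E b, ⟨b, hb, rfl⟩, Hom.id L M, rfl⟩
  · intro hendo m
    refine Set.Finite.subset (hendo m) ?_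
    intro ρ hρ f a ha
    exact hρ 1 (fun x => f (x 0)) (hom_isPolymorphism f) (fun _ => a) (fun _ => ha)
end

section
/- The age of any homomorphism-homogeneous relational structure has the homo-amalgamation property (HAP). -/
open FirstOrder FirstOrder.Language FirstOrder.Language.Structure CategoryTheory

universe u v w w' w'' w'''

/-- The age of any homomorphism-homogeneous relational structure has the HAP. -/
theorem stmt1 (L : FirstOrder.Language.{u, v}) [L.IsRelational]
    (M : Type w') [L.Structure M] (hM : HomHomogeneous L M) :
    HasHAP L (Age.{u, v, w, w'} L M) := by
  rintro A ⟨hA, ⟨eA⟩⟩ B₁ ⟨hB₁, ⟨e₁⟩⟩ B₂ ⟨hB₂, ⟨e₂⟩⟩ f₁ f₂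
  classical
  let e : A ↪[L] M := e₂.comp f₂
  let S : L.Substructure M := e.toHom.range
  have hSfin : (S : Set M).Finite := by
    have : (S : Set M) = Set.range e := Hom.range_coe _
    rw [this]; exact Set.finite_range _
  let h : S →[L] M := (e₁.toHom.comp f₁).comp e.equivRange.symm.toHom
  obtain ⟨g, hg⟩ := hM S hSfin h
  have key : ∀ a : A, g (e a) = e₁ (f₁ a) := by
    intro a
    have := hg (e.equivRange a)
    rw [Embedding.equivRange_apply] at this
    rw [this]; simp [h]
  -- the target substructure
  let s : Set M := Set.range e₁ ∪ Set.range (g ∘ e₂)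
  let D' : L.Substructure M := Substructure.closure L s
  have hD'coe : (D' : Set M) = s := Substructure.closure_eq_of_isRelational L s
  have hD'fin : (D' : Set M).Finite := by
    rw [hD'coe]; exact (Set.finite_range _).union (Set.finite_range _)
  have hm₁ : ∀ b : B₁, e₁ b ∈ D' := fun b =>
    Substructure.subset_closure (Set.mem_union_left _ ⟨b, rfl⟩)
  have hm₂ : ∀ b : B₂, (g.comp e₂.toHom) b ∈ D' := fun b =>
    Substructure.subset_closure (Set.mem_union_right _ ⟨b, rfl⟩)
  have : Finite D' := hD'fin.to_subtype
  obtain ⟨n, ⟨q0⟩⟩ := Finite.exists_equiv_fin D'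
  let q : D' ≃ ULift.{w} (Fin n) := q0.trans Equiv.ulift.symm
  letI i : L.Structure (ULift.{w} (Fin n)) := q.inducedStructure
  let D : Bundled.{w} L.Structure := ⟨ULift.{w} (Fin n), i⟩
  let qe : D' ≃[L] D := q.inducedStructureEquiv
  refine ⟨D, ⟨Finite.of_equiv _ q, ⟨(Substructure.subtype D').comp qe.symm.toEmbedding⟩⟩,
    qe.toEmbedding.comp (FirstOrder.Language.Embedding.codRestrict D' e₁ hm₁),
    qe.toHom.comp (Hom.codRestrict D' (g.comp e₂.toHom) hm₂), ?_⟩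
  intro a
  have hx : (FirstOrder.Language.Embedding.codRestrict D' e₁ hm₁) (f₁ a)
      = (Hom.codRestrict D' (g.comp e₂.toHom) hm₂) (f₂ a) := by
    ext
    simp only [FirstOrder.Language.Embedding.codRestrict_apply', Hom.codRestrict,
      Hom.comp_apply, Embedding.coe_toHom]
    exact (key a).symm
  simp only [Embedding.comp_apply, Hom.comp_apply, Equiv.coe_toHom, Equiv.coe_toEmbedding, hx]
  rfl
end

section
/- Let C be a nonempty class of finite relational structures over a common relational language that is closed under isomorphism, has only countably many isomorphism types, and has the hereditary property (HP), the joint embedding property (JEP), and the homo-amalgamation property (HAP). Then there exists a countable homomorphism-homogeneous relational structure H whose age equals C. -/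
open FirstOrder FirstOrder.Language FirstOrder.Language.Structure CategoryTheory

universe u v w w' w'' w'''

section AuxStmt2
variable {L : FirstOrder.Language.{u, v}}

structure MyHTask (L : FirstOrder.Language.{u, v}) (C : Set (Bundled.{w} L.Structure))
    (X : Bundled.{w} L.Structure) where
  A : Bundled.{w} L.Structure
  B : Bundled.{w} L.Structure
  hA : A ∈ C
  hB : B ∈ C
  f : A →[L] X
  j : A ↪[L] B

def MyHasHAP (L : FirstOrder.Language.{u, v}) (C : Set (Bundled.{w} L.Structure)) : Prop :=
  ∀ A ∈ C, ∀ B₁ ∈ C, ∀ B₂ ∈ C, ∀ (f₁ : A →[L] B₁) (f₂ : A ↪[L] B₂),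
    ∃ D ∈ C, ∃ (g₁ : B₁ ↪[L] D) (g₂ : B₂ →[L] D), ∀ a, g₁ (f₁ a) = g₂ (f₂ a)

theorem myMultiAmalg {C : Set (Bundled.{w} L.Structure)} (hHAP : MyHasHAP L C) :
    ∀ (n : ℕ) (X : Bundled.{w} L.Structure), X ∈ C → ∀ (ts : List (MyHTask L C X)),
      ts.length = n →
      ∃ Y ∈ C, ∃ e : X ↪[L] Y, ∀ t ∈ ts, ∃ g : t.B →[L] Y, ∀ a, g (t.j a) = e (t.f a) := by
  intro n
  induction n with
  | zero =>
    intro X hX ts hts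
    rw [List.length_eq_zero_iff] at hts
    subst hts
    exact ⟨X, hX, Embedding.refl L X, by simp⟩
  | succ n ih =>
    intro X hX ts hts
    match ts, hts with
    | t :: ts', hts =>
      obtain ⟨D, hD, g₁, g₂, hcomm⟩ := hHAP t.A t.hA X hX t.B t.hB t.f t.j
      have hlen : (ts'.map fun t' => MyHTask.mk t'.A t'.B t'.hA t'.hB (g₁.toHom.comp t'.f) t'.j).length = n := by
        simpa using Nat.succ_injective hts
      obtain ⟨Y, hY, e, hext⟩ := ih D hD _ hlen
      refine ⟨Y, hY, e.comp g₁, ?_⟩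
      intro t' ht'
      rcases List.mem_cons.1 ht' with rfl | ht'
      · refine ⟨(e.toHom).comp g₂, fun a => ?_⟩
        simp [← hcomm a]
      · obtain ⟨g, hg⟩ := hext _ (List.mem_map_of_mem ht')
        exact ⟨g, fun a => hg a⟩


theorem myKeyStepA {C : Set (Bundled.{w} L.Structure)}
    (hfin : ∀ A ∈ C, Finite A)
    (hHP : ∀ A ∈ C, ∀ B : Bundled.{w} L.Structure, Nonempty (B ↪[L] A) → B ∈ C)
    (hJEP : ∀ A ∈ C, ∀ B ∈ C, ∃ D ∈ C, Nonempty (A ↪[L] D) ∧ Nonempty (B ↪[L] D))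
    (hHAP : MyHasHAP L C)
    (F : ℕ → Bundled.{w} L.Structure) (hF : ∀ n, F n ∈ C)
    (n : ℕ) (X : Bundled.{w} L.Structure) (hX : X ∈ C) :
    ∃ Y ∈ C, ∃ e : X ↪[L] Y, Nonempty ((F n) ↪[L] Y) ∧
      ∀ k, k ≤ n → ∀ (B : L.Substructure (F k)) (f : B →[L] X),
        ∃ g : (F k) →[L] Y, ∀ x : B, g (x : F k) = e (f x) := by
  classical
  haveI : ∀ m, Finite (F m) := fun m => hfin _ (hF m)
  haveI hXfin : Finite X := hfin _ hX
  haveI : ∀ m, Finite (L.Substructure (F m)) :=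
    fun m => Finite.of_injective _ (SetLike.coe_injective (A := L.Substructure (F m)))
  haveI : ∀ m (B : L.Substructure (F m)), Finite (B →[L] X) :=
    fun m B => Finite.of_injective _ (DFunLike.coe_injective (F := B →[L] X))
  let T := Σ (k : Fin (n + 1)) (B : L.Substructure (F k.val)), (B →[L] X)
  haveI : Finite T := by infer_instance
  haveI : Fintype T := Fintype.ofFinite T
  -- the task associated to an element of T
  let mk : T → MyHTask L C X := fun p =>
    ⟨Bundled.of p.2.1, F p.1.val,
      hHP (F p.1.val) (hF _) _ ⟨p.2.1.subtype⟩, hF p.1.val, p.2.2, p.2.1.subtype⟩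
  let ts : List (MyHTask L C X) := (Finset.univ : Finset T).toList.map mk
  obtain ⟨Y₀, hY₀, e₀, hext₀⟩ := myMultiAmalg hHAP ts.length X hX ts rfl
  obtain ⟨D, hD, ⟨eY⟩, ⟨eF⟩⟩ := hJEP Y₀ hY₀ (F n) (hF n)
  refine ⟨D, hD, eY.comp e₀, ⟨eF⟩, ?_⟩
  intro k hk B f
  have hmem : mk ⟨⟨k, Nat.lt_succ_of_le hk⟩, B, f⟩ ∈ ts :=
    List.mem_map_of_mem (f := mk) (Finset.mem_toList.2 (Finset.mem_univ _))
  obtain ⟨g₀, hg₀⟩ := hext₀ _ hmem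
  refine ⟨(eY.toHom).comp g₀, fun x => ?_⟩
  have := hg₀ x
  exact congrArg eY this


theorem myNatLERecSucc {G' : ℕ → Type w} [∀ i, L.Structure (G' i)]
    (f' : ∀ n, G' n ↪[L] G' (n + 1)) (n : ℕ) (x : G' n) :
    DirectedSystem.natLERec f' n (n + 1) (Nat.le_succ n) x = f' n x := by
  have h := congrFun (DirectedSystem.coe_natLERec f' n (n + 1) (Nat.le_succ n)) x
  rw [h, Nat.leRecOn_succ']

theorem myFiniteSubsetRange {G' : ℕ → Type w} [∀ i, L.Structure (G' i)]
    (f' : ∀ i j : ℕ, i ≤ j → G' i ↪[L] G' j) [DirectedSystem G' fun i j h => f' i j h]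
    {s : Set (Language.DirectLimit G' f')} (hs : s.Finite) :
    ∃ i, s ⊆ Set.range (DirectLimit.of L ℕ G' f' i) := by
  refine Set.Finite.induction_on s hs ⟨0, by simp⟩ ?_
  rintro a s _ _ ⟨i, hi⟩
  obtain ⟨j, x, hx⟩ := DirectLimit.exists_of a
  refine ⟨max i j, ?_⟩
  intro y hy
  rcases Set.mem_insert_iff.1 hy with rfl | hy
  · exact ⟨f' j (max i j) (le_max_right i j) x, by rw [DirectLimit.of_f]; exact hx⟩
  · obtain ⟨z, hz⟩ := hi hy
    exact ⟨f' i (max i j) (le_max_left i j) z, by rw [DirectLimit.of_f]; exact hz⟩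

theorem myConstruction {C : Set (Bundled.{w} L.Structure)}
    (hne : C.Nonempty) (hfin : ∀ A ∈ C, Finite A) (hHAP : MyHasHAP L C)
    (hHP : ∀ A ∈ C, ∀ B : Bundled.{w} L.Structure, Nonempty (B ↪[L] A) → B ∈ C)
    (hJEP : ∀ A ∈ C, ∀ B ∈ C, ∃ D ∈ C, Nonempty (A ↪[L] D) ∧ Nonempty (B ↪[L] D))
    (F : ℕ → Bundled.{w} L.Structure) (hF : ∀ n, F n ∈ C)
    (hcover : ∀ A ∈ C, ∃ k, Nonempty (A ≃[L] F k)) :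
    ∃ H : Bundled.{w} L.Structure, Countable H ∧
      ({N : Bundled.{w} L.Structure | Finite N ∧ Nonempty (N ↪[L] H)} = C) ∧
      ∀ (A P : Bundled.{w} L.Structure), A ∈ C → P ∈ C → ∀ (j : A ↪[L] P) (f : A →[L] H),
        ∃ g : P →[L] H, ∀ x, g (j x) = f x := by
  classical
  obtain ⟨A₀, hA₀⟩ := hne
  choose Y hY e hemb hext using myKeyStepA hfin hHP hJEP hHAP F hF
  let Gc : ℕ → {X : Bundled.{w} L.Structure // X ∈ C} :=
    fun n => Nat.rec ⟨A₀, hA₀⟩ (fun m p => ⟨Y m p.1 p.2, hY m p.1 p.2⟩) n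
  let G' : ℕ → Type w := fun n => ((Gc n).1 : Type w)
  let step : ∀ n, G' n ↪[L] G' (n + 1) := fun n => e n (Gc n).1 (Gc n).2
  let chain : ∀ i j : ℕ, i ≤ j → G' i ↪[L] G' j := fun i j h =>
    DirectedSystem.natLERec step i j h
  haveI : DirectedSystem G' fun i j h => chain i j h :=
    DirectedSystem.natLERec.directedSystem step
  haveI : ∀ n, Finite (G' n) := fun n => hfin _ (Gc n).2
  let H := Language.DirectLimit G' chain
  haveI : Countable H := by
    have : Countable (Σ n, G' n) := by infer_instance
    unfold H
    unfold Language.DirectLimit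
    infer_instance
  have hof : ∀ i : ℕ, ∀ y : (DirectLimit.of L ℕ G' chain i).toHom.range,
      DirectLimit.of L ℕ G' chain i ((DirectLimit.of L ℕ G' chain i).equivRange.symm y) = y := by
    intro i y
    calc DirectLimit.of L ℕ G' chain i ((DirectLimit.of L ℕ G' chain i).equivRange.symm y)
        = ((DirectLimit.of L ℕ G' chain i).equivRange
            ((DirectLimit.of L ℕ G' chain i).equivRange.symm y) : H) :=
          (Embedding.equivRange_apply _ _).symm
      _ = y := by rw [Language.Equiv.apply_symm_apply]
  refine ⟨Bundled.of H, inferInstanceAs (Countable H), ?_, ?_⟩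
  · ext N
    simp only [Set.mem_setOf_eq]
    constructor
    · rintro ⟨hNfin, ⟨g⟩⟩
      haveI := hNfin
      obtain ⟨i, hi⟩ := myFiniteSubsetRange chain (Set.finite_range (f := (g : N → H)))
      have hmem : ∀ x : N, g x ∈ (DirectLimit.of L ℕ G' chain i).toHom.range := by
        intro x
        obtain ⟨y, hy⟩ := hi (Set.mem_range_self x)
        exact Hom.mem_range.2 ⟨y, hy⟩
      exact hHP (Gc i).1 (Gc i).2 N
        ⟨((DirectLimit.of L ℕ G' chain i).equivRange.symm.toEmbedding).comp
          (FirstOrder.Language.Embedding.codRestrict _ g hmem)⟩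
    · intro hA
      haveI := hfin N hA
      obtain ⟨k, ⟨σ⟩⟩ := hcover N hA
      obtain ⟨emb⟩ := hemb k (Gc k).1 (Gc k).2
      exact ⟨inferInstance,
        ⟨(DirectLimit.of L ℕ G' chain (k + 1)).comp (emb.comp σ.toEmbedding)⟩⟩
  · intro A P hA hP j f
    haveI : Finite A := hfin A hA
    obtain ⟨n₀, hsub⟩ := myFiniteSubsetRange chain (Set.finite_range (f := (f : A → H)))
    have hmem : ∀ a : A, f a ∈ (DirectLimit.of L ℕ G' chain n₀).toHom.range := by
      intro a
      obtain ⟨y, hy⟩ := hsub (Set.mem_range_self a)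
      exact Hom.mem_range.2 ⟨y, hy⟩
    let f' : A →[L] G' n₀ :=
      ((DirectLimit.of L ℕ G' chain n₀).equivRange.symm.toHom).comp
        (Hom.codRestrict _ f hmem)
    have hf' : ∀ a : A, DirectLimit.of L ℕ G' chain n₀ (f' a) = f a := fun a => hof n₀ _
    obtain ⟨k, ⟨σ⟩⟩ := hcover P hP
    set n := max n₀ k with hn
    let j' : A ↪[L] F k := σ.toEmbedding.comp j
    let B := j'.toHom.range
    let ψ : A ≃[L] B := j'.equivRange
    let f'' : B →[L] G' n := ((chain n₀ n (le_max_left _ _)).toHom).comp (f'.comp ψ.symm.toHom)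
    obtain ⟨g₀, hg₀⟩ := hext n (Gc n).1 (Gc n).2 k (le_max_right _ _) B f''
    refine ⟨((DirectLimit.of L ℕ G' chain (n + 1)).toHom.comp g₀).comp σ.toHom, fun a => ?_⟩
    have h1 : σ (j a) = ((ψ a : B) : F k) := (Embedding.equivRange_apply j' a).symm
    show DirectLimit.of L ℕ G' chain (n + 1) (g₀ (σ (j a))) = f a
    rw [h1, hg₀ (ψ a)]
    have h2 : e n (Gc n).1 (Gc n).2 (f'' (ψ a)) = chain n (n + 1) (Nat.le_succ n) (f'' (ψ a)) :=
      (myNatLERecSucc step n _).symm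
    rw [h2, DirectLimit.of_f]
    show DirectLimit.of L ℕ G' chain n (chain n₀ n _ (f' (ψ.symm (ψ a)))) = f a
    rw [DirectLimit.of_f, Language.Equiv.symm_apply_apply]
    exact hf' a


end AuxStmt2

theorem myWeakToStrong (L : FirstOrder.Language.{u, v}) [L.IsRelational]
    (H : Type w) [L.Structure H] [Countable H]
    (hw : ∀ (B C : L.Substructure H) (h : B ≤ C), (C : Set H).Finite →
      ∀ f : B →[L] H, ∃ g : C →[L] H, ∀ x : B, g (Substructure.inclusion h x) = f x) :
    ∀ S : L.Substructure H, (S : Set H).Finite →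
      ∀ f : S →[L] H, ∃ g : H →[L] H, ∀ x : S, g (x : H) = f x := by
  intro S hSfin f
  classical
  by_cases hE : IsEmpty H
  · exact ⟨Hom.id L H, fun x => isEmptyElim ((x : H))⟩
  · rw [not_isEmpty_iff] at hE
    obtain ⟨h, hsurj⟩ := exists_surjective_nat H
    let s : ℕ → L.Substructure H :=
      fun n => Substructure.closure L ((S : Set H) ∪ h '' {i | i < n})
    have hscoe : ∀ n, ((s n : Set H)) = (S : Set H) ∪ h '' {i | i < n} :=
      fun n => Substructure.closure_eq_of_isRelational L _
    have hsmono : ∀ {m n : ℕ}, m ≤ n → s m ≤ s n := by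
      intro m n hmn
      exact Substructure.closure_mono
        (Set.union_subset_union_right _ (Set.image_mono (fun i hi => lt_of_lt_of_le hi hmn)))
    have hsfin : ∀ n, ((s n : Set H)).Finite := by
      intro n
      rw [hscoe]
      exact hSfin.union ((Set.finite_Iio n).image h)
    have hcov : ∀ x : H, ∃ n, x ∈ s n := by
      intro x
      obtain ⟨i, rfl⟩ := hsurj x
      refine ⟨i + 1, ?_⟩
      rw [← SetLike.mem_coe, hscoe]
      exact Or.inr ⟨i, Nat.lt_succ_self i, rfl⟩
    have h0 : s 0 ≤ S := by
      intro x hx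
      rw [← SetLike.mem_coe, hscoe] at hx
      rcases hx with hx | ⟨i, hi, _⟩
      · exact hx
      · exact absurd hi (Nat.not_lt_zero i)
    have hS0 : S ≤ s 0 := by
      intro x hx
      rw [← SetLike.mem_coe, hscoe]
      exact Or.inl hx
    let f₀ : s 0 →[L] H := f.comp (Substructure.inclusion h0).toHom
    have hstep : ∀ n (fn : s n →[L] H), ∃ g : s (n + 1) →[L] H,
        ∀ x : s n, g (Substructure.inclusion (hsmono (Nat.le_succ n)) x) = fn x :=
      fun n fn => hw (s n) (s (n + 1)) (hsmono (Nat.le_succ n)) (hsfin (n + 1)) fn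
    choose stepf hstepf using hstep
    let fseq : ∀ n, s n →[L] H := fun n => Nat.rec f₀ stepf n
    have hfseq : ∀ n (x : s n),
        fseq (n + 1) (Substructure.inclusion (hsmono (Nat.le_succ n)) x) = fseq n x :=
      fun n x => hstepf n (fseq n) x
    have coh : ∀ (x : H) (m n : ℕ) (hmn : m ≤ n) (hxm : x ∈ s m),
        fseq n ⟨x, hsmono hmn hxm⟩ = fseq m ⟨x, hxm⟩ := by
      intro x m n hmn hxm
      induction n, hmn using Nat.le_induction with
      | base => rfl
      | succ n hmn ih =>
        have heq : (⟨x, hsmono (Nat.le_succ n) (hsmono hmn hxm)⟩ : s (n + 1)) =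
            Substructure.inclusion (hsmono (Nat.le_succ n)) ⟨x, hsmono hmn hxm⟩ := by
          apply Subtype.ext
          simp [Substructure.coe_inclusion]
        have : fseq (n+1) ⟨x, hsmono (Nat.le_succ n) (hsmono hmn hxm)⟩ = fseq n ⟨x, hsmono hmn hxm⟩ := by
          rw [heq]; exact hfseq n _
        rw [show (⟨x, hsmono (Nat.le_trans hmn (Nat.le_succ n)) hxm⟩ : s (n+1)) =
          ⟨x, hsmono (Nat.le_succ n) (hsmono hmn hxm)⟩ from rfl, this, ih]
    let val : H → H := fun x => fseq (hcov x).choose ⟨x, (hcov x).choose_spec⟩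
    have hval : ∀ (x : H) (n : ℕ) (hxn : x ∈ s n), val x = fseq n ⟨x, hxn⟩ := by
      intro x n hxn
      have h1 := coh x (hcov x).choose (max (hcov x).choose n) (le_max_left _ _) (hcov x).choose_spec
      have h2 := coh x n (max (hcov x).choose n) (le_max_right _ _) hxn
      show fseq (hcov x).choose ⟨x, (hcov x).choose_spec⟩ = fseq n ⟨x, hxn⟩
      rw [← h1, ← h2]
    let g : H →[L] H :=
      { toFun := val
        map_fun' := fun {n} F _ => isEmptyElim F
        map_rel' := by
          intro m r x hx
          let N := Finset.univ.sup fun i : Fin m => (hcov (x i)).choose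
          have hxN : ∀ i, x i ∈ s N :=
            fun i => hsmono (Finset.le_sup (Finset.mem_univ i)) (hcov (x i)).choose_spec
          let x' : Fin m → s N := fun i => ⟨x i, hxN i⟩
          have hx' : RelMap r x' := by
            show RelMap r fun i => ((x' i : H))
            exact hx
          have := (fseq N).map_rel' r x' hx'
          have hcomp : (val ∘ x) = (fseq N) ∘ x' := by
            funext i
            exact hval (x i) N (hxN i)
          rw [hcomp]
          exact this }
    refine ⟨g, fun x => ?_⟩
    show val (x : H) = f x
    rw [hval (x : H) 0 (hS0 x.2)]
    rfl


/-- Every nonempty isomorphism-closed class of finite relational structures with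
countably many isomorphism types having the HP, the JEP and the HAP is the age of a countable
homomorphism-homogeneous structure. -/
theorem stmt2 (L : FirstOrder.Language.{u, v}) [L.IsRelational]
    (C : Set (Bundled.{w} L.Structure)) (hne : C.Nonempty)
    (hfin : ∀ A ∈ C, Finite A)
    (hiso : IsoClosed L C)
    (hcount : ∃ S : Set (Bundled.{w} L.Structure), S.Countable ∧
      ∀ A ∈ C, ∃ B ∈ S, Nonempty (A ≃[L] B))
    (hHP : HasHP L C) (hJEP : HasJEP L C) (hHAP : HasHAP L C) :
    ∃ H : Bundled.{w} L.Structure, Countable H ∧ HomHomogeneous L H ∧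
      Age.{u, v, w, w} L H = C := by
  classical
  obtain ⟨Srep, hScount, hScov⟩ := hcount
  have hS'ne : (Srep ∩ C).Nonempty := by
    obtain ⟨A₀, hA₀⟩ := hne
    obtain ⟨B, hBS, ⟨σ⟩⟩ := hScov A₀ hA₀
    exact ⟨B, hBS, hiso A₀ hA₀ B ⟨σ⟩⟩
  obtain ⟨F, hFrange⟩ := Set.Countable.exists_eq_range
    (hScount.mono Set.inter_subset_left) hS'ne
  have hF : ∀ n, F n ∈ C := by
    intro n
    have : F n ∈ Srep ∩ C := hFrange ▸ Set.mem_range_self n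
    exact this.2
  have hcover : ∀ A ∈ C, ∃ k, Nonempty ((A : Type w) ≃[L] F k) := by
    intro A hA
    obtain ⟨B, hBS, ⟨σ⟩⟩ := hScov A hA
    have hB : B ∈ Srep ∩ C := ⟨hBS, hiso A hA B ⟨σ⟩⟩
    rw [hFrange] at hB
    obtain ⟨k, rfl⟩ := hB
    exact ⟨k, ⟨σ⟩⟩
  obtain ⟨Hb, hcnt, hage, hext⟩ := myConstruction hne hfin hHAP hHP hJEP F hF hcover
  refine ⟨Hb, hcnt, ?_, hage⟩
  intro S hSfin f
  refine myWeakToStrong L Hb ?_ S hSfin f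
  intro B C' hBC' hC'fin fB
  haveI hBfin' : Finite ↥B := Set.Finite.to_subtype (hC'fin.subset hBC')
  haveI hC'fin' : Finite ↥C' := hC'fin.to_subtype
  have hBmem : (Bundled.of (↥B) : Bundled.{w} L.Structure) ∈ C := by rw [← hage]; exact ⟨hBfin', ⟨B.subtype⟩⟩
  have hCmem : (Bundled.of (↥C') : Bundled.{w} L.Structure) ∈ C := by rw [← hage]; exact ⟨hC'fin', ⟨C'.subtype⟩⟩
  exact hext (Bundled.of ↥B) (Bundled.of ↥C') hBmem hCmem (Substructure.inclusion hBC') fB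
end

section
/- Let H and H' be relational structures over the same language. If H ⪯_h H' and H is weakly homomorphism-homogeneous, then H' is weakly homomorphism-homogeneous. -/
open FirstOrder FirstOrder.Language FirstOrder.Language.Structure CategoryTheory

universe u v w w' w'' w'''

/-- If `M ⪯_h N` and `M` is weakly homomorphism-homogeneous, then `N` is weakly
homomorphism-homogeneous. -/
theorem stmt3 (L : FirstOrder.Language.{u, v}) [L.IsRelational]
    (M : Type w') (N : Type w'') [L.Structure M] [L.Structure N]
    (h : PrecH.{u, v, w, w', w''} L M N) (hM : WeaklyHomHomogeneous L M) :
    WeaklyHomHomogeneous L N := by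
  intro B C hBC hCfin f
  haveI : Finite C := hCfin.to_subtype
  obtain ⟨n, ⟨εn⟩⟩ := Finite.exists_equiv_fin C
  let ε : C ≃ ULift.{w} (Fin n) := εn.trans Equiv.ulift.symm
  letI : L.Structure (ULift.{w} (Fin n)) := Equiv.inducedStructure ε
  let ej : C ≃[L] ULift.{w} (Fin n) := Equiv.inducedStructureEquiv ε
  have hage : (⟨ULift.{w} (Fin n), inferInstance⟩ : Bundled L.Structure) ∈
      Age.{u, v, w, w''} L N :=
    ⟨inferInstanceAs (Finite (ULift (Fin n))),
      ⟨(C.subtype).comp ej.symm.toEmbedding⟩⟩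
  obtain ⟨_, ⟨k⟩⟩ := h.1 hage
  let emb : C ↪[L] M := k.comp ej.toEmbedding
  let emb2 : B ↪[L] M := emb.comp (Substructure.inclusion hBC)
  let A : L.Substructure M := emb2.toHom.range
  let C' : L.Substructure M := emb.toHom.range
  have hAC : A ≤ C' := by
    rintro x ⟨b, rfl⟩
    exact ⟨Substructure.inclusion hBC b, rfl⟩
  have hC'fin : (C' : Set M).Finite := by
    have : (C' : Set M) = Set.range emb := by
      ext x
      simp [C', Hom.mem_range]
    rw [this]
    exact Set.finite_range _
  let eqB : B ≃[L] A := emb2.equivRange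
  let eqC : C ≃[L] C' := emb.equivRange
  let f' : A →[L] N := f.comp eqB.symm.toHom
  obtain ⟨g', hg'⟩ := h.2 A C' hAC hC'fin f'
  refine ⟨g'.comp eqC.toHom, fun x => ?_⟩
  have key : Substructure.inclusion hAC (eqB x) = eqC (Substructure.inclusion hBC x) := by
    apply Subtype.ext
    have h1 : ((eqB x : A) : M) = emb2 x := Embedding.equivRange_apply emb2 x
    have h2 : ((eqC (Substructure.inclusion hBC x) : C') : M)
        = emb (Substructure.inclusion hBC x) := Embedding.equivRange_apply emb _
    exact h1.trans h2.symm
  have := hg' (eqB x)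
  simp only [f', Hom.comp_apply, Equiv.toHom, Equiv.symm_apply_apply] at this
  calc (g'.comp eqC.toHom) (Substructure.inclusion hBC x)
      = g' (eqC (Substructure.inclusion hBC x)) := rfl
    _ = g' (Substructure.inclusion hAC (eqB x)) := by rw [key]
    _ = f x := by rw [this]; exact congrArg f (eqB.symm_apply_apply x)
end

section
/- Let H and H' be relational structures over the same language. If H' is weakly homomorphism-homogeneous and Age(H) = Age(H'), then H ⪯_h H'. -/
open FirstOrder FirstOrder.Language FirstOrder.Language.Structure CategoryTheory

universe u v w w' w'' w'''

/-- If `N` is weakly homomorphism-homogeneous and `M` and `N` have the same age,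
then `M ⪯_h N`. -/
theorem stmt4 (L : FirstOrder.Language.{u, v}) [L.IsRelational]
    (M : Type w') (N : Type w'') [L.Structure M] [L.Structure N]
    (hN : WeaklyHomHomogeneous L N)
    (hage : Age.{u, v, w, w'} L M = Age.{u, v, w, w''} L N) :
    PrecH.{u, v, w, w', w''} L M N := by
  constructor
  · rw [hage]
  intro A B h hBfin f
  haveI : Finite ↥B := hBfin.to_subtype
  -- Build an embedding of ↥B into N using equality of ages
  obtain ⟨n, ⟨eq0⟩⟩ := Finite.exists_equiv_fin ↥B
  let eq' : ↥B ≃ ULift.{w} (Fin n) := eq0.trans Equiv.ulift.symm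
  letI : L.Structure (ULift.{w} (Fin n)) := eq'.inducedStructure
  let D : Bundled.{w} L.Structure := ⟨ULift.{w} (Fin n), inferInstance⟩
  have hD : D ∈ Age.{u, v, w, w'} L M := by
    refine ⟨inferInstanceAs (Finite (ULift.{w} (Fin n))),
      ⟨B.subtype.comp ((eq'.inducedStructureEquiv (L := L)).symm.toEmbedding)⟩⟩
  rw [hage] at hD
  obtain ⟨-, ⟨j⟩⟩ := hD
  let e : ↥B ↪[L] N := j.comp (eq'.inducedStructureEquiv (L := L)).toEmbedding
  -- images of A and B inside N
  let e' : ↥A ↪[L] N := e.comp (Substructure.inclusion h)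
  let TA : L.Substructure N := e'.toHom.range
  let TB : L.Substructure N := e.toHom.range
  have hle : TA ≤ TB := by
    rintro x hx
    obtain ⟨y, rfl⟩ := Hom.mem_range.1 hx
    exact Hom.mem_range.2 ⟨Substructure.inclusion h y, rfl⟩
  have hTBfin : (TB : Set N).Finite := by
    have : (TB : Set N) = Set.range e := by
      ext x; simp [TB, Hom.mem_range]
    rw [this]
    exact Set.finite_range _
  -- the homomorphism TA → N induced by f
  let ψ : ↥A ≃[L] ↥TA := e'.equivRange
  let fA : ↥TA →[L] N := f.comp (ψ.symm.toHom)
  obtain ⟨g', hg'⟩ := hN TA TB hle hTBfin fA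
  refine ⟨g'.comp (e.equivRange.toHom), fun x => ?_⟩
  have key : e.equivRange (Substructure.inclusion h x) = Substructure.inclusion hle (ψ x) := by
    apply Subtype.ext
    simp only [Embedding.equivRange_apply]
    rfl
  calc g'.comp (e.equivRange.toHom) (Substructure.inclusion h x)
      = g' (Substructure.inclusion hle (ψ x)) := by rw [Hom.comp_apply]; exact congrArg g' key
    _ = fA (ψ x) := hg' (ψ x)
    _ = f x := by simp [fA]
end

section
/- Any two countable homomorphism-homogeneous relational structures over the same language with the same age are homomorphism-equivalent. -/
open FirstOrder FirstOrder.Language FirstOrder.Language.Structure CategoryTheory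

universe u v w w' w'' w'''

section

variable {L : FirstOrder.Language.{u, v}} {M : Type w'} {N : Type w''}
  [L.Structure M] [L.Structure N]

lemma age_embed (hsub : Age.{u, v, w, w'} L M ⊆ Age.{u, v, w, w''} L N)
    (B : L.Substructure M) (hB : (B : Set M).Finite) : Nonempty (B ↪[L] N) := by
  haveI : Finite B := hB.to_subtype
  obtain ⟨n, ⟨eqn⟩⟩ := Finite.exists_equiv_fin B
  let e : B ≃ ULift.{w} (Fin n) := eqn.trans Equiv.ulift.symm
  letI : L.Structure (ULift.{w} (Fin n)) := e.inducedStructure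
  let A : Bundled.{w} L.Structure := ⟨ULift.{w} (Fin n), inferInstance⟩
  have hA : A ∈ Age.{u, v, w, w'} L M := by
    refine ⟨inferInstanceAs (Finite (ULift.{w} (Fin n))), ⟨B.subtype.comp ?_⟩⟩
    exact (e.inducedStructureEquiv).symm.toEmbedding
  obtain ⟨-, ⟨g⟩⟩ := hsub hA
  exact ⟨g.comp (e.inducedStructureEquiv).toEmbedding⟩

lemma extend_hom [L.IsRelational]
    (hsub : Age.{u, v, w, w'} L M ⊆ Age.{u, v, w, w''} L N)
    (hN : HomHomogeneous L N) (A B : L.Substructure M) (hAB : A ≤ B)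
    (hBfin : (B : Set M).Finite) (f : A →[L] N) :
    ∃ g : B →[L] N, ∀ x : A, g (Substructure.inclusion hAB x) = f x := by
  obtain ⟨e⟩ := age_embed.{u, v, w} hsub B hBfin
  haveI : Finite A := (hBfin.subset hAB).to_subtype
  let j : A →[L] N := e.toHom.comp (Substructure.inclusion hAB).toHom
  have jinj : Function.Injective j := by
    intro a b hab
    have := e.injective hab
    exact (Substructure.inclusion hAB).injective this
  let T : L.Substructure N := j.range
  have hTfin : (T : Set N).Finite := by
    rw [Hom.range_coe]
    exact Set.finite_range j
  have hmem : ∀ t : T, ∃ a : A, j a = (t : N) := fun t => Hom.mem_range.mp t.2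
  let pick : T → A := fun t => (hmem t).choose
  have hpick : ∀ t : T, j (pick t) = (t : N) := fun t => (hmem t).choose_spec
  let k : T →[L] N :=
    { toFun := fun t => f (pick t)
      map_fun' := fun {n} F => isEmptyElim F
      map_rel' := by
        intro n R x hx
        have hx' : RelMap R (fun i => ((x i : N))) := hx
        have hx2 : RelMap R (fun i => j (pick (x i))) := by
          simpa only [hpick] using hx'
        have hx3 : RelMap R (fun i => (pick (x i) : M)) := by
          have := (e.map_rel' R (fun i => Substructure.inclusion hAB (pick (x i)))).mp hx2
          exact this
        exact f.map_rel' R (fun i => pick (x i)) hx3 }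
  obtain ⟨g, hg⟩ := hN T hTfin k
  refine ⟨g.comp e.toHom, fun a => ?_⟩
  have hmemT : j a ∈ T := Hom.mem_range_self j a
  have h1 : g (e (Substructure.inclusion hAB a)) = g ((⟨j a, hmemT⟩ : T) : N) := rfl
  have h2 : g ((⟨j a, hmemT⟩ : T) : N) = k ⟨j a, hmemT⟩ := hg ⟨j a, hmemT⟩
  have h3 : k ⟨j a, hmemT⟩ = f (pick ⟨j a, hmemT⟩) := rfl
  have h4 : pick ⟨j a, hmemT⟩ = a := jinj (hpick ⟨j a, hmemT⟩)
  simp only [Hom.comp_apply, Embedding.coe_toHom]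
  rw [h1, h2, h3, h4]

lemma hom_of_age [L.IsRelational] [Countable M]
    (hsub : Age.{u, v, w, w'} L M ⊆ Age.{u, v, w, w''} L N)
    (hN : HomHomogeneous L N) : Nonempty (M →[L] N) := by
  rcases finite_or_infinite M with hMfin | hMinf
  · obtain ⟨e⟩ := age_embed.{u, v, w} hsub ⊤ (Set.toFinite _)
    exact ⟨e.toHom.comp Substructure.topEquiv.symm.toEmbedding.toHom⟩
  · have : Nonempty M := inferInstance
    obtain ⟨enum, henum⟩ := exists_surjective_nat M
    let B : ℕ → L.Substructure M := fun k =>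
      { carrier := enum '' Set.Iio k, fun_mem := fun {n} F => isEmptyElim F }
    have hmono : ∀ {k l : ℕ}, k ≤ l → B k ≤ B l := fun h =>
      Set.image_mono (Set.Iio_subset_Iio h)
    have hfin : ∀ k, ((B k : Set M)).Finite := fun k => (Set.finite_Iio k).image _
    let F : ∀ k, B k →[L] N := fun k => Nat.rec
      ((age_embed.{u, v, w} hsub (B 0) (hfin 0)).some.toHom)
      (fun k fk => (extend_hom.{u, v, w} hsub hN (B k) (B (k+1))
        (hmono (Nat.le_succ k)) (hfin (k+1)) fk).choose) k
    have hF : ∀ k (x : B k),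
        F (k+1) (Substructure.inclusion (hmono (Nat.le_succ k)) x) = F k x :=
      fun k => (extend_hom.{u, v, w} hsub hN (B k) (B (k+1))
        (hmono (Nat.le_succ k)) (hfin (k+1)) (F k)).choose_spec
    have hcompat : ∀ k l (hkl : k ≤ l) (x : M) (hx : x ∈ B k),
        F l ⟨x, hmono hkl hx⟩ = F k ⟨x, hx⟩ := by
      intro k l hkl
      induction l, hkl using Nat.le_induction with
      | base => intro x hx; rfl
      | succ l hkl ih =>
        intro x hx
        have h1 := hF l ⟨x, hmono hkl hx⟩
        exact h1.trans (ih x hx)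
    let ix : M → ℕ := fun x => (henum x).choose
    have hix : ∀ x, enum (ix x) = x := fun x => (henum x).choose_spec
    have hmemB : ∀ x : M, x ∈ B (ix x + 1) := fun x =>
      ⟨ix x, Nat.lt_succ_self _, hix x⟩
    refine ⟨{ toFun := fun x => F (ix x + 1) ⟨x, hmemB x⟩,
              map_fun' := fun {n} Fn => isEmptyElim Fn,
              map_rel' := ?_ }⟩
    intro n R x hx
    classical
    let kk : ℕ := Finset.univ.sup (fun i : Fin n => ix (x i) + 1)
    have hk : ∀ i, ix (x i) + 1 ≤ kk := fun i => Finset.le_sup (f := fun i : Fin n => ix (x i) + 1) (Finset.mem_univ i)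
    let x' : Fin n → B kk := fun i => ⟨x i, hmono (hk i) (hmemB (x i))⟩
    have hx' : RelMap R x' := hx
    have h2 := (F kk).map_rel' R x' hx'
    have h3 : (fun i => F (ix (x i) + 1) ⟨x i, hmemB (x i)⟩) = (F kk) ∘ x' := by
      funext i
      exact (hcompat _ _ (hk i) (x i) (hmemB (x i))).symm
    show RelMap R (fun i => F (ix (x i) + 1) ⟨x i, hmemB (x i)⟩)
    rw [h3]; exact h2

end

/-- Any two countable homomorphism-homogeneous relational structures over the same
language with the same age are homomorphism-equivalent. -/
theorem stmt5 (L : FirstOrder.Language.{u, v}) [L.IsRelational]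
    (M : Type w') (N : Type w'') [L.Structure M] [L.Structure N]
    [Countable M] [Countable N]
    (hM : HomHomogeneous L M) (hN : HomHomogeneous L N)
    (hage : Age.{u, v, w, w'} L M = Age.{u, v, w, w''} L N) :
    Nonempty (M →[L] N) ∧ Nonempty (N →[L] M) := by
  exact ⟨hom_of_age hage.le hN, hom_of_age hage.ge hM⟩
end

section
/- Let A and B be countable relational structures over the same language such that Age(A) projects onto Age(B), and suppose that B is weakly oligomorphic and weakly homomorphism-homogeneous. Then there exists a homomorphism from A to B. -/
open FirstOrder FirstOrder.Language FirstOrder.Language.Structure CategoryTheory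

universe u v w w' w'' w'''

section StmtSixAux

variable {L : FirstOrder.Language.{u, v}} [L.IsRelational]

/-- Structure pulled back along a map into a structure (relational language). -/
def pbStruct {X M : Type*} [L.Structure M] (f : X → M) : L.Structure X where
  funMap := fun {n} F _ => isEmptyElim F
  RelMap := fun {n} R x => Structure.RelMap R (f ∘ x)

/-- Partial homomorphism tuples. -/
def pht {M : Type w'} {N : Type w''} [L.Structure M] [L.Structure N] (d : M → ℕ) (n : ℕ) :
    Set (Fin n → N) :=
  {a | ∀ (k : ℕ) (R : L.Relations k) (y : Fin k → {x : M // d x < n}),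
    Structure.RelMap R (fun l => ((y l : M))) →
      Structure.RelMap R (fun l => a ⟨d (y l), (y l).2⟩)}

lemma pht_inv {M : Type w'} {N : Type w''} [L.Structure M] [L.Structure N] {d : M → ℕ} {n : ℕ}
    (h : N →[L] N) {a : Fin n → N} (ha : a ∈ pht (L := L) d n) : h ∘ a ∈ pht (L := L) d n := by
  intro k R y hy
  exact h.map_rel R _ (ha k R y hy)

lemma pht_restrict {M : Type w'} {N : Type w''} [L.Structure M] [L.Structure N] {d : M → ℕ}
    {n m : ℕ} (hnm : n ≤ m) {a : Fin m → N} (ha : a ∈ pht (L := L) d m) :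
    a ∘ Fin.castLE hnm ∈ pht (L := L) d n := by
  intro k R y hy
  exact ha k R (fun l => ⟨(y l : M), lt_of_lt_of_le (y l).2 hnm⟩) hy

/-- The weak type of a tuple: the collection of invariant relations containing it. -/
def TsetN {N : Type w''} [L.Structure N] (k : ℕ) (a : Fin k → N) : Set (Set (Fin k → N)) :=
  {ρ | (∀ f : N →[L] N, ∀ c ∈ ρ, f ∘ c ∈ ρ) ∧ a ∈ ρ}

lemma keyL {N : Type w''} [L.Structure N] {k : ℕ} {a b : Fin k → N}
    (h : TsetN (L := L) k a ⊆ TsetN (L := L) k b) : ∃ f : N →[L] N, f ∘ a = b := by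
  have hmem : ({c | ∃ f : N →[L] N, f ∘ a = c} : Set (Fin k → N)) ∈ TsetN (L := L) k a := by
    constructor
    · rintro f c ⟨g, rfl⟩
      exact ⟨f.comp g, rfl⟩
    · exact ⟨Hom.id L N, rfl⟩
  exact (h hmem).2

lemma tset_finite {N : Type w''} [L.Structure N] (hwo : WeaklyOligomorphic L N) (k : ℕ) :
    (Set.range (TsetN (L := L) (N := N) k)).Finite := by
  apply Set.Finite.subset (hwo k).finite_subsets
  rintro T ⟨a, rfl⟩
  intro ρ hρ
  exact hρ.1

/-- Forever-extendible partial tuples. -/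
def ExtP {M : Type w'} {N : Type w''} [L.Structure M] [L.Structure N] (d : M → ℕ) (n : ℕ)
    (a : Fin n → N) : Prop :=
  ∀ m : ℕ, ∀ h : n ≤ m, ∃ b ∈ pht (L := L) (N := N) d m, a = b ∘ Fin.castLE h

lemma ext_step {M : Type w'} {N : Type w''} [L.Structure M] [L.Structure N]
    (hwo : WeaklyOligomorphic L N) (d : M → ℕ) (n : ℕ) (a : Fin n → N)
    (ha : ExtP (L := L) d n a) :
    ∃ a' : Fin (n+1) → N, ExtP (L := L) d (n+1) a' ∧ a = a' ∘ Fin.castLE (Nat.le_succ n) := by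
  choose b hb hab using fun m : ℕ => ha (n+1+m) (by omega)
  set c : ℕ → (Fin (n+1) → N) := fun m => b m ∘ Fin.castLE (by omega : n+1 ≤ n+1+m) with hc
  have hcρ : ∀ m, c m ∈ pht (L := L) d (n+1) := fun m => pht_restrict _ (hb m)
  have hca : ∀ m, a = c m ∘ Fin.castLE (Nat.le_succ n) := by
    intro m
    rw [hab m]
    rfl
  -- pigeonhole on weak types
  haveI : Finite ↥(Set.range (TsetN (L := L) (N := N) (n+1))) :=
    (tset_finite hwo (n+1)).to_subtype
  obtain ⟨y, hy⟩ := Finite.exists_infinite_fiber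
    (fun m : ℕ => (⟨TsetN (L := L) (n+1) (c m), ⟨c m, rfl⟩⟩ :
      ↥(Set.range (TsetN (L := L) (N := N) (n+1)))))
  have hyinf : {m : ℕ | TsetN (L := L) (n+1) (c m) = y.1}.Infinite := by
    have := Set.infinite_coe_iff.mp hy
    apply this.mono
    intro m hm
    simpa [Subtype.ext_iff] using hm
  obtain ⟨m₀, hm₀⟩ := hyinf.nonempty
  refine ⟨c m₀, ?_, hca m₀⟩
  intro m hm
  obtain ⟨m₁, hm₁mem, hm₁gt⟩ := hyinf.exists_gt m
  have htset : TsetN (L := L) (n+1) (c m₁) = TsetN (L := L) (n+1) (c m₀) := by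
    rw [hm₁mem, hm₀]
  obtain ⟨f, hf⟩ := keyL (L := L) (le_of_eq htset)
  have hmle : m ≤ n+1+m₁ := by omega
  refine ⟨f ∘ (b m₁ ∘ Fin.castLE hmle), pht_inv f (pht_restrict hmle (hb m₁)), ?_⟩
  rw [← hf]
  rfl

end StmtSixAux

/-- If `M`, `N` are countable, `Age M` projects onto `Age N`, and `N` is weakly
oligomorphic and weakly homomorphism-homogeneous, then there is a homomorphism `M → N`. -/
theorem stmt6 (L : FirstOrder.Language.{u, v}) [L.IsRelational]
    (M : Type w') (N : Type w'') [L.Structure M] [L.Structure N]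
    [Countable M] [Countable N]
    (hage : ProjectsOnto L (Age.{u, v, w, w'} L M) (Age.{u, v, w, w''} L N))
    (hwo : WeaklyOligomorphic L N) (hwhh : WeaklyHomHomogeneous L N) :
    Nonempty (M →[L] N) := by
  classical
  obtain ⟨d, hd⟩ := Countable.exists_injective_nat M
  -- Step 1: for each n, a "partial homomorphism" defined on S n := {x // d x < n}
  have hhom : ∀ n : ℕ, ∃ g : {x : M // d x < n} → N,
      ∀ (k : ℕ) (R : L.Relations k) (y : Fin k → {x : M // d x < n}),
        Structure.RelMap R (fun l => ((y l : M))) →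
          Structure.RelMap R (fun l => g (y l)) := by
    intro n
    haveI : Finite {x : M // d x < n} := Finite.of_injective
      (fun x => (⟨d x.1, x.2⟩ : Fin n)) (by
        intro a b h
        exact Subtype.ext (hd (by simpa using congrArg Fin.val h)))
    obtain ⟨k, ⟨e⟩⟩ := Finite.exists_equiv_fin {x : M // d x < n}
    set fX : ULift.{w} (Fin k) → M := fun i => ((e.symm i.down : {x : M // d x < n}) : M)
      with hfX
    have hinj : Function.Injective fX := by
      intro i j h
      have h3 : i.down = j.down := e.symm.injective (Subtype.ext h)
      cases i; cases j; cases h3; rfl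
    letI SX : L.Structure (ULift.{w} (Fin k)) := pbStruct (L := L) fX
    obtain ⟨B, hB, ⟨φ⟩⟩ := hage ⟨ULift.{w} (Fin k), SX⟩
      ⟨inferInstanceAs (Finite (ULift.{w} (Fin k))),
       ⟨{ toFun := fX, inj' := hinj, map_fun' := fun {m} F _ => isEmptyElim F,
          map_rel' := fun {m} R v => Iff.rfl }⟩⟩
    obtain ⟨finB, ⟨ψ⟩⟩ := hB
    refine ⟨fun x => ψ.toHom (φ (ULift.up (e x))), ?_⟩
    intro k' R y hy
    have h1 : Structure.RelMap (M := ULift.{w} (Fin k)) R (fun l => ULift.up (e (y l))) := by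
      show Structure.RelMap R (fX ∘ fun l => ULift.up (e (y l)))
      have : (fX ∘ fun l => ULift.up (e (y l))) = fun l => ((y l : M)) := by
        funext l
        simp [hfX]
      rwa [this]
    exact (ψ.toHom.comp φ).map_rel R _ h1
  by_cases hN : Nonempty N
  · -- main construction
    obtain ⟨nd⟩ := hN
    have hbase : ∀ m : ℕ, ∃ a : Fin m → N, a ∈ pht (L := L) (M := M) (N := N) d m := by
      intro m
      obtain ⟨g, hg⟩ := hhom m
      refine ⟨fun i => if h : ∃ x : M, d x = (i : ℕ) then
        g ⟨h.choose, by rw [h.choose_spec]; exact i.2⟩ else nd, ?_⟩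
      intro k R y hy
      have heq : (fun l => (fun i : Fin m => if h : ∃ x : M, d x = (i : ℕ) then
          g ⟨h.choose, by rw [h.choose_spec]; exact i.2⟩ else nd) ⟨d (y l), (y l).2⟩)
          = fun l => g (y l) := by
        funext l
        have hex : ∃ x : M, d x = ((⟨d (y l), (y l).2⟩ : Fin m) : ℕ) := ⟨(y l), rfl⟩
        simp only [dif_pos hex]
        congr 1
        exact Subtype.ext (hd hex.choose_spec)
      rw [heq]
      exact hg k R y hy
    have hbase0 : ExtP (L := L) (N := N) d 0 (fun i => i.elim0) := by
      intro m hm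
      obtain ⟨b, hb⟩ := hbase m
      exact ⟨b, hb, funext fun i => i.elim0⟩
    choose stepf hstep using fun (n : ℕ) (p : {a : Fin n → N // ExtP (L := L) d n a}) =>
      ext_step (L := L) hwo d n p.1 p.2
    let A : ∀ n : ℕ, {a : Fin n → N // ExtP (L := L) d n a} :=
      fun n => Nat.rec (motive := fun n => {a : Fin n → N // ExtP (L := L) d n a})
        ⟨fun i => i.elim0, hbase0⟩ (fun n p => ⟨stepf n p, (hstep n p).1⟩) n
    have hA : ∀ n, (A n).1 = (A (n+1)).1 ∘ Fin.castLE (Nat.le_succ n) :=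
      fun n => (hstep n (A n)).2
    have mono : ∀ (i n : ℕ) (hi : i < n) (m : ℕ) (h : n ≤ m),
        (A n).1 ⟨i, hi⟩ = (A m).1 ⟨i, lt_of_lt_of_le hi h⟩ := by
      intro i n hi m h
      induction m, h using Nat.le_induction with
      | base => rfl
      | succ m hm ih =>
        rw [ih]
        exact congrFun (hA m) ⟨i, lt_of_lt_of_le hi hm⟩
    refine ⟨{ toFun := fun x => (A (d x + 1)).1 ⟨d x, Nat.lt_succ_self _⟩,
              map_fun' := fun {m} F _ => isEmptyElim F,
              map_rel' := ?_ }⟩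
    intro k R x hx
    set n := (Finset.univ.sup fun l : Fin k => d (x l)) + 1 with hn
    have hlt : ∀ l, d (x l) < n := by
      intro l
      have : d (x l) ≤ Finset.univ.sup fun l => d (x l) := Finset.le_sup (f := fun l => d (x l)) (Finset.mem_univ l)
      omega
    obtain ⟨b, hbρ, hab⟩ := (A n).2 n le_rfl
    have hAρ : (A n).1 ∈ pht (L := L) d n := by
      rw [hab]
      exact pht_restrict le_rfl hbρ
    have hrel := hAρ k R (fun l => ⟨x l, hlt l⟩) hx
    have heq2 : (fun l => (A n).1 ⟨d (x l), hlt l⟩)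
        = fun l => (A (d (x l) + 1)).1 ⟨d (x l), Nat.lt_succ_self _⟩ := by
      funext l
      exact (mono (d (x l)) (d (x l) + 1) (Nat.lt_succ_self _) n (hlt l)).symm
    rwa [heq2] at hrel
  · -- N is empty, so M must be empty
    haveI hNe : IsEmpty N := not_nonempty_iff.mp hN
    haveI hMe : IsEmpty M := by
      by_contra hM
      rw [not_isEmpty_iff] at hM
      obtain ⟨x₀⟩ := hM
      obtain ⟨g, -⟩ := hhom (d x₀ + 1)
      exact hN ⟨g ⟨x₀, Nat.lt_succ_self _⟩⟩
    refine ⟨{ toFun := fun x => isEmptyElim x,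
              map_fun' := fun {m} F _ => isEmptyElim F,
              map_rel' := ?_ }⟩
    intro k R x hx
    cases k with
    | zero =>
      obtain ⟨g, hg⟩ := hhom 0
      have h0 := hg 0 R (fun l => l.elim0) (by
        have hxe : (fun l : Fin 0 => (((l.elim0 : {x : M // d x < 0})) : M)) = x := by
          funext l; exact l.elim0
        rw [hxe]; exact hx)
      have hfe : (fun l : Fin 0 => g l.elim0) = (fun x : M => (isEmptyElim x : N)) ∘ x := by
        funext l; exact l.elim0
      rwa [hfe] at h0
    | succ k => exact isEmptyElim (x 0)
end

section
/- Let A and B be countable relational structures over the same language such that Age(A) projects onto Age(B), and suppose that B is weakly oligomorphic. Then there exists a homomorphism from A to B. -/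
open FirstOrder FirstOrder.Language FirstOrder.Language.Structure CategoryTheory

universe u v w w' w'' w'''

section StmtAux
set_option linter.unusedSectionVars false

variable {L : FirstOrder.Language.{u, v}} [L.IsRelational]

/-- In a relational language every set is a substructure. -/
def relSub {M : Type w'} [L.Structure M] (s : Set M) : L.Substructure M where
  carrier := s
  fun_mem := fun f => isEmptyElim f

lemma exists_hom_finite {M : Type w'} {N : Type w''} [L.Structure M] [L.Structure N]
    (hage : ProjectsOnto L (Age.{u, v, w, w'} L M) (Age.{u, v, w, w''} L N))
    (s : Set M) (hs : s.Finite) : Nonempty ((relSub (L := L) s) →[L] N) := by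
  haveI : Finite s := hs
  obtain ⟨k, ⟨g0⟩⟩ := Finite.exists_equiv_fin s
  let g : (relSub (L := L) s) ≃ ULift.{w} (Fin k) := g0.trans Equiv.ulift.symm
  letI St : L.Structure (ULift.{w} (Fin k)) := g.inducedStructure
  let E : (relSub (L := L) s) ≃[L] ULift.{w} (Fin k) := g.inducedStructureEquiv
  let A : Bundled.{w} L.Structure := ⟨ULift.{w} (Fin k), St⟩
  have hA : A ∈ Age.{u, v, w, w'} L M :=
    ⟨inferInstanceAs (Finite (ULift.{w} (Fin k))),
      ⟨(relSub (L := L) s).subtype.comp E.symm.toEmbedding⟩⟩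
  obtain ⟨B, ⟨hBfinB, ⟨emb⟩⟩, ⟨hh⟩⟩ := hage A hA
  exact ⟨(emb.toHom.comp hh).comp E.toHom⟩

variable (L)

def GoodT {M : Type w'} {N : Type w''} [L.Structure M] [L.Structure N]
    (e : ℕ → M) (n : ℕ) (b : Fin n → N) : Prop :=
  ∀ {k : ℕ} (R : L.Relations k) (v : Fin k → Fin n),
    RelMap R (fun t => e (v t).val) → RelMap R (fun t => b (v t))

def orb {N : Type w''} [L.Structure N] {n : ℕ} (b : Fin n → N) : Set (Fin n → N) :=
  {c | ∃ f : N →[L] N, c = ⇑f ∘ b}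

variable {L}

lemma goodT_exists {M : Type w'} {N : Type w''} [L.Structure M] [L.Structure N]
    (hage : ProjectsOnto L (Age.{u, v, w, w'} L M) (Age.{u, v, w, w''} L N))
    (e : ℕ → M) (n : ℕ) : ∃ b : Fin n → N, GoodT L e n b := by
  obtain ⟨h⟩ := exists_hom_finite.{u,v,w} hage (Set.range fun i : Fin n => e i.val)
    (Set.finite_range _)
  refine ⟨fun i => h ⟨e i.val, Set.mem_range_self i⟩, ?_⟩
  intro k R v hR
  exact h.map_rel R (fun t => ⟨e (v t).val, Set.mem_range_self (v t)⟩) hR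

lemma goodT_castLE {M : Type w'} {N : Type w''} [L.Structure M] [L.Structure N]
    {e : ℕ → M} {n m : ℕ} (h : n ≤ m) {b : Fin m → N} (hb : GoodT L e m b) :
    GoodT L e n (fun i => b (Fin.castLE h i)) := by
  intro k R v hR
  exact hb R (fun t => Fin.castLE h (v t)) (by simpa using hR)

lemma goodT_orb {M : Type w'} {N : Type w''} [L.Structure M] [L.Structure N]
    {e : ℕ → M} {n : ℕ} {b c : Fin n → N} (hb : GoodT L e n b) (hc : c ∈ orb L b) :
    GoodT L e n c := by
  obtain ⟨f, rfl⟩ := hc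
  intro k R v hR
  exact f.map_rel R (fun t => b (v t)) (hb R v hR)

lemma self_mem_orb {N : Type w''} [L.Structure N] {n : ℕ} (b : Fin n → N) : b ∈ orb L b :=
  ⟨Hom.id L N, rfl⟩

lemma orb_invariant {N : Type w''} [L.Structure N] {n : ℕ} (b : Fin n → N) :
    ∀ f : N →[L] N, ∀ a ∈ orb L b, ⇑f ∘ a ∈ orb L b := by
  rintro f a ⟨g, rfl⟩
  exact ⟨f.comp g, rfl⟩

lemma orb_comp_castSucc {N : Type w''} [L.Structure N] {n : ℕ} (b : Fin (n + 1) → N) :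
    orb L (b ∘ Fin.castSucc) = (fun c => c ∘ Fin.castSucc) '' orb L b := by
  ext c
  constructor
  · rintro ⟨f, rfl⟩
    exact ⟨⇑f ∘ b, ⟨f, rfl⟩, rfl⟩
  · rintro ⟨d, ⟨f, rfl⟩, rfl⟩
    exact ⟨f, rfl⟩

lemma ultra_pigeon {α β : Type*} (U : Ultrafilter β) (f : β → α)
    (h : (Set.range f).Finite) : ∃ a, {m | f m = a} ∈ U := by
  by_contra hc
  push_neg at hc
  have h1 : ∀ a, {m | f m = a}ᶜ ∈ U := fun a => Ultrafilter.compl_mem_iff_notMem.2 (hc a)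
  have h2 : (⋂ a ∈ Set.range f, {m | f m = a}ᶜ) ∈ U :=
    (Filter.biInter_mem h).2 fun a _ => h1 a
  obtain ⟨m, hm⟩ := Ultrafilter.nonempty_of_mem h2
  simp only [Set.mem_iInter, Set.mem_compl_iff, Set.mem_setOf_eq] at hm
  exact hm (f m) ⟨m, rfl⟩ rfl

end StmtAux

/-- If `M`, `N` are countable, `Age M` projects onto `Age N`, and `N` is weakly
oligomorphic, then there is a homomorphism `M → N`. -/
theorem stmt7 (L : FirstOrder.Language.{u, v}) [L.IsRelational]
    (M : Type w') (N : Type w'') [L.Structure M] [L.Structure N]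
    [Countable M] [Countable N]
    (hage : ProjectsOnto L (Age.{u, v, w, w'} L M) (Age.{u, v, w, w''} L N))
    (hwo : WeaklyOligomorphic L N) :
    Nonempty (M →[L] N) := by
  classical
  by_cases hM : Nonempty M
  case neg =>
    haveI : IsEmpty M := not_nonempty_iff.mp hM
    obtain ⟨h0⟩ := exists_hom_finite.{u, v, w} hage (∅ : Set M) Set.finite_empty
    refine ⟨⟨fun m => isEmptyElim m, fun f => isEmptyElim f, ?_⟩⟩
    intro k r x hx
    have hcoe : (fun t => ((isEmptyElim (x t) : relSub (L := L) (∅ : Set M)) : M)) = x :=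
      funext fun t => isEmptyElim (x t)
    have hx' : RelMap r (fun t => (isEmptyElim (x t) : relSub (L := L) (∅ : Set M))) := by
      show RelMap r (fun t => ((isEmptyElim (x t) : relSub (L := L) (∅ : Set M)) : M))
      rw [hcoe]; exact hx
    have := h0.map_rel r _ hx'
    convert this using 2
    funext t
    exact isEmptyElim (x t)
  case pos =>
    obtain ⟨e, he⟩ := exists_surjective_nat M
    choose B hB using goodT_exists.{u, v, w} hage e
    let t : ∀ _ _ : ℕ, _ := fun n m : ℕ =>
      if h : n ≤ m then (fun i : Fin n => B m (Fin.castLE h i)) else B n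
    have ht_good : ∀ n m, GoodT L e n (t n m) := by
      intro n m
      by_cases h : n ≤ m
      · simpa only [t, dif_pos h] using goodT_castLE h (hB m)
      · simpa only [t, dif_neg h] using hB n
    have ht_restrict : ∀ n m, n + 1 ≤ m → t n m = (t (n + 1) m) ∘ Fin.castSucc := by
      intro n m h
      funext i
      simp only [t, dif_pos h, dif_pos (Nat.le_of_succ_le h), Function.comp_apply]
      congr 1
    obtain ⟨U, hU⟩ := Filter.exists_ultrafilter_le (Filter.atTop : Filter ℕ)
    have hfin : ∀ n, (Set.range fun m => orb L (t n m)).Finite := by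
      intro n
      refine (hwo n).subset ?_
      rintro ρ ⟨m, rfl⟩
      exact orb_invariant _
    choose ρ hρ using fun n => ultra_pigeon U (fun m => orb L (t n m)) (hfin n)
    have hρ_orb : ∀ n, ∃ m, orb L (t n m) = ρ n := fun n =>
      (Ultrafilter.nonempty_of_mem (hρ n)).imp fun m hm => hm
    have hρ_good : ∀ n, ∀ c ∈ ρ n, GoodT L e n c := by
      intro n c hc
      obtain ⟨m, hm⟩ := hρ_orb n
      rw [← hm] at hc
      exact goodT_orb (ht_good n m) hc
    have hρ_ne : ∀ n, (ρ n).Nonempty := by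
      intro n
      obtain ⟨m, hm⟩ := hρ_orb n
      exact ⟨t n m, hm ▸ self_mem_orb (t n m)⟩
    have hcoh : ∀ n, ρ n = (fun c => c ∘ Fin.castSucc) '' ρ (n + 1) := by
      intro n
      have h3 : {m | n + 1 ≤ m} ∈ U := hU (Filter.mem_atTop (n + 1))
      obtain ⟨m, hm⟩ := Ultrafilter.nonempty_of_mem
        (Filter.inter_mem (Filter.inter_mem (hρ n) (hρ (n + 1))) h3)
      obtain ⟨⟨hm1, hm2⟩, hm3⟩ := hm
      calc ρ n = orb L (t n m) := hm1.symm
        _ = orb L (t (n + 1) m ∘ Fin.castSucc) := by rw [← ht_restrict n m hm3]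
        _ = (fun c => c ∘ Fin.castSucc) '' orb L (t (n + 1) m) := orb_comp_castSucc _
        _ = (fun c => c ∘ Fin.castSucc) '' ρ (n + 1) := by rw [hm2]
    have step : ∀ n, ∀ c ∈ ρ n, ∃ c' ∈ ρ (n + 1), c' ∘ Fin.castSucc = c := by
      intro n c hc
      rw [hcoh n] at hc
      obtain ⟨c', hc', h⟩ := hc
      exact ⟨c', hc', h⟩
    choose g hg1 hg2 using step
    obtain ⟨c0, hc0⟩ := hρ_ne 0
    let seq : ∀ n, { x : Fin n → N // x ∈ ρ n } := fun n =>
      Nat.rec ⟨c0, hc0⟩ (fun k p => ⟨g k p.1 p.2, hg1 k p.1 p.2⟩) n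
    have hseq : ∀ n, (seq (n + 1)).1 ∘ Fin.castSucc = (seq n).1 := fun n =>
      hg2 n (seq n).1 (seq n).2
    have hstab : ∀ (i n m : ℕ) (h : n ≤ m) (hi : i < n),
        (seq m).1 ⟨i, lt_of_lt_of_le hi h⟩ = (seq n).1 ⟨i, hi⟩ := by
      intro i n m h hi
      induction m, h using Nat.le_induction with
      | base => rfl
      | succ m hm ih =>
        have h1 := congrFun (hseq m) ⟨i, lt_of_lt_of_le hi hm⟩
        have h2 : Fin.castSucc ⟨i, lt_of_lt_of_le hi hm⟩ =
            (⟨i, lt_of_lt_of_le hi (Nat.le_succ_of_le hm)⟩ : Fin (m + 1)) := by ext; simp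
        rw [Function.comp_apply, h2] at h1
        rw [h1, ih]
    choose idx hidx using fun m => he m
    refine ⟨⟨fun m => (seq (idx m + 1)).1 ⟨idx m, Nat.lt_succ_self _⟩,
      fun f => isEmptyElim f, ?_⟩⟩
    intro k r x hx
    set nn := (Finset.univ.sup fun s : Fin k => idx (x s)) + 1 with hnn
    have hlt : ∀ s : Fin k, idx (x s) < nn :=
      fun s => Nat.lt_succ_of_le (Finset.le_sup (f := fun s : Fin k => idx (x s)) (Finset.mem_univ s))
    have h1 : RelMap r (fun s => e ((⟨idx (x s), hlt s⟩ : Fin nn)).val) := by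
      have : (fun s => e ((⟨idx (x s), hlt s⟩ : Fin nn)).val) = x :=
        funext fun s => hidx (x s)
      rw [this]; exact hx
    have h2 := hρ_good nn (seq nn).1 (seq nn).2 r (fun s => ⟨idx (x s), hlt s⟩) h1
    have h3 : (fun s : Fin k => (seq nn).1 ⟨idx (x s), hlt s⟩) =
        ((fun m => (seq (idx m + 1)).1 ⟨idx m, Nat.lt_succ_self _⟩) ∘ x) :=
      funext fun s => hstab (idx (x s)) (idx (x s) + 1) nn (hlt s) (Nat.lt_succ_self _)
    rw [← h3]
    exact h2
end

section
/- Let C be a homo-amalgamation class of finite relational structures (i.e. C is closed under isomorphism and has the HP, the JEP, and the HAP), and let D be the class of all members of C that are hom-irreducible in C. If C projects onto D, then D has the hereditary property (HP) and the amalgamation property (AP). -/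
open FirstOrder FirstOrder.Language FirstOrder.Language.Structure CategoryTheory

universe u v w w' w'' w'''

section helper
variable {L : FirstOrder.Language} [L.IsRelational]
  {B E D : Type*} [L.Structure B] [L.Structure E] [L.Structure D]

lemma isHomEmbedding_of_comp (f : B →[L] E) (j : E ↪[L] D) (e : B ↪[L] D)
    (h : ∀ x, j (f x) = e x) : IsHomEmbedding f := by
  refine ⟨⟨⟨f, fun x y hxy => e.injective ?_⟩, fun F => isEmptyElim F, fun {n} r x => ?_⟩,
    fun x => rfl⟩
  · rw [← h, ← h, hxy]
  · have h1 : RelMap r (fun i => j (f (x i))) ↔ RelMap r (fun i => f (x i)) := j.map_rel r _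
    have h2 : RelMap r (fun i => e (x i)) ↔ RelMap r x := e.map_rel r x
    simp only [h] at h1
    exact h1.symm.trans h2

end helper

/-- If `C` is a homo-amalgamation class of finite relational structures and `D` is
the class of members of `C` that are hom-irreducible in `C`, and `C` projects onto `D`, then `D`
has the HP and the AP. -/
theorem stmt8 (L : FirstOrder.Language.{u, v}) [L.IsRelational]
    (C : Set (Bundled.{w} L.Structure))
    (hfin : ∀ A ∈ C, Finite A) (hiso : IsoClosed L C)
    (hHP : HasHP L C) (hJEP : HasJEP L C) (hHAP : HasHAP L C)
    (hproj : ProjectsOnto L C {A | A ∈ C ∧ HomIrreducibleIn L C A}) :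
    HasHP L {A | A ∈ C ∧ HomIrreducibleIn L C A} ∧
      HasAP L {A | A ∈ C ∧ HomIrreducibleIn L C A} := by
  constructor
  · -- HP
    rintro A ⟨hAC, hAirr⟩ B ⟨i⟩
    have hBC : B ∈ C := hHP A hAC B ⟨i⟩
    refine ⟨hBC, fun E hEC f => ?_⟩
    obtain ⟨D', hD'C, g₁, g₂, hcomm⟩ := hHAP B hBC E hEC A hAC f i
    obtain ⟨e₂, he₂⟩ := hAirr D' hD'C g₂
    exact isHomEmbedding_of_comp f g₁ (e₂.comp i)
      (fun x => by rw [hcomm x, Embedding.comp_apply, he₂])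
  · -- AP
    rintro A ⟨hAC, _⟩ B₁ ⟨hB₁C, hB₁irr⟩ B₂ ⟨hB₂C, hB₂irr⟩ f₁ f₂
    obtain ⟨D', hD'C, g₁, g₂, hcomm⟩ := hHAP A hAC B₁ hB₁C B₂ hB₂C f₁.toHom f₂
    obtain ⟨E, hED, ⟨h⟩⟩ := hproj D' hD'C
    obtain ⟨e₁, he₁⟩ := hB₁irr E hED.1 (h.comp g₁.toHom)
    obtain ⟨e₂, he₂⟩ := hB₂irr E hED.1 (h.comp g₂)
    refine ⟨E, hED, e₁, e₂, fun a => ?_⟩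
    rw [he₁, he₂]
    simp only [Hom.comp_apply]
    rw [Embedding.coe_toHom] at *
    exact congrArg h (hcomm a)
end

section
/- Let A be a countable weakly oligomorphic, homomorphism-homogeneous relational structure. Then Age(A) projects onto C_A, i.e. every finite substructure of A admits a homomorphism onto a finite substructure of A that is hom-irreducible in Age(A). -/
open FirstOrder FirstOrder.Language FirstOrder.Language.Structure CategoryTheory

universe u v w w' w'' w'''

/-- If `M` is a countable weakly oligomorphic homomorphism-homogeneous structure,
then the age of `M` projects onto `C_M`, the class of finite structures in the age of `M` that
are hom-irreducible in the age of `M`. -/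
theorem stmt9 (L : FirstOrder.Language.{u, v}) [L.IsRelational]
    (M : Type w') [L.Structure M] [Countable M]
    (hwo : WeaklyOligomorphic L M) (hhh : HomHomogeneous L M) :
    ProjectsOnto L (Age.{u, v, w, w'} L M) (CA.{u, v, w, w'} L M) := by

  classical
  rintro A ⟨hAfin, ⟨e⟩⟩
  haveI : Finite A := hAfin
  haveI : Fintype A := Fintype.ofFinite A
  set n : ℕ := Fintype.card A with hn
  set ε : A ≃ Fin n := Fintype.equivFin A with hε
  set abar : Fin n → M := fun i => e (ε.symm i) with habar
  -- the "up-set" of a tuple under the endomorphism action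
  set Up : (Fin n → M) → Set (Fin n → M) :=
    fun a => {c | ∃ f : M →[L] M, (f : M → M) ∘ a = c} with hUpdef
  have hUpInv : ∀ a, ∀ f : M →[L] M, ∀ c ∈ Up a, (f : M → M) ∘ c ∈ Up a := by
    rintro a f c ⟨h, rfl⟩
    exact ⟨f.comp h, rfl⟩
  have hself : ∀ a, a ∈ Up a := fun a => ⟨Hom.id L M, rfl⟩
  have hfin2 : (Up '' Up abar).Finite := by
    refine (hwo n).subset ?_
    rintro _ ⟨c, hc, rfl⟩ f a ha
    exact hUpInv c f a ha
  obtain ⟨U, hU, hmin⟩ : ∃ U ∈ Up '' Up abar, ∀ U' ∈ Up '' Up abar, id U' ≤ id U → id U = id U' := by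
    obtain ⟨U, hU, hmin⟩ := Set.Finite.exists_minimalFor id _ hfin2
      ⟨Up abar, Set.mem_image_of_mem _ (hself abar)⟩
    exact ⟨U, hU, fun U' hU' hle => le_antisymm (hmin hU' hle) hle⟩
  obtain ⟨b, hb, rfl⟩ := hU
  -- key minimality property of the tuple b
  have key : ∀ f : M →[L] M, ∃ g : M →[L] M, ∀ i, g (f (b i)) = b i := by
    intro f
    have h1 : (f : M → M) ∘ b ∈ Up abar := hUpInv abar f b hb
    have h2 : Up ((f : M → M) ∘ b) ⊆ Up b := by
      rintro _ ⟨h, rfl⟩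
      exact ⟨h.comp f, by ext i; rfl⟩
    have h3 := hmin _ (Set.mem_image_of_mem _ h1) h2
    simp only [id_eq] at h3
    have h4 : b ∈ Up ((f : M → M) ∘ b) := h3 ▸ hself b
    obtain ⟨g, hg⟩ := h4
    exact ⟨g, fun i => congrFun hg i⟩
  -- the substructure on the range of b (relational language: any set is closed)
  set S : L.Substructure M := ⟨Set.range b, fun {m} f0 => isEmptyElim f0⟩ with hSdef
  have hSfin : (S : Set M).Finite := Set.finite_range b
  have hmemS : ∀ i, b i ∈ S := fun i => ⟨i, rfl⟩
  haveI : Finite S := hSfin.to_subtype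
  haveI : Fintype S := Fintype.ofFinite S
  set k : ℕ := Fintype.card S with hk
  set φ : (S : Type _) ≃ ULift.{w} (Fin k) :=
    (Fintype.equivFin S).trans Equiv.ulift.symm with hφ
  letI str : L.Structure (ULift.{w} (Fin k)) := Equiv.inducedStructure φ
  set ψ : (S : Type _) ≃[L] ULift.{w} (Fin k) := Equiv.inducedStructureEquiv φ with hψ
  set B : Bundled.{w} L.Structure := ⟨ULift.{w} (Fin k), str⟩ with hBdef
  haveI hBfin : Finite (ULift.{w} (Fin k)) := inferInstance
  have hBage : B ∈ Age.{u, v, w, w'} L M :=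
    ⟨hBfin, ⟨(S.subtype.comp ψ.symm.toEmbedding : ULift.{w} (Fin k) ↪[L] M)⟩⟩
  refine ⟨B, ⟨hBage, ?_⟩, ?_⟩
  · -- B is hom-irreducible in the age of M
    rintro C ⟨hCfin, ⟨eC⟩⟩ h
    set j : (S : Type _) →[L] M := eC.toHom.comp (h.comp ψ.toHom) with hjdef
    obtain ⟨f, hf⟩ := hhh S hSfin j
    obtain ⟨g, hg⟩ := key f
    have gfid : ∀ x : S, g (f (x : M)) = (x : M) := by
      rintro ⟨x, hx⟩
      obtain ⟨i, rfl⟩ := hx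
      exact hg i
    have hfval : ∀ x : S, f (x : M) = eC (h (ψ x)) := fun x => hf x
    have hreflect : ∀ {m : ℕ} (r : L.Relations m) (x : Fin m → ULift.{w} (Fin k)),
        RelMap r (h ∘ x) → RelMap r x := by
      intro m r x hx
      have h5 : RelMap r (fun i => eC (h (x i))) := (eC.map_rel r (h ∘ x)).2 hx
      have h6 : (fun i => eC (h (x i))) = fun i => f ((ψ.symm (x i) : S) : M) := by
        funext i
        rw [hfval (ψ.symm (x i)), FirstOrder.Language.Equiv.apply_symm_apply]
      rw [h6] at h5
      have h7 := f.map_rel r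
      have h8 : RelMap r (fun i => g (f ((ψ.symm (x i) : S) : M))) := g.map_rel r _ h5
      have h9 : RelMap r (fun i => ((ψ.symm (x i) : S) : M)) := by
        have : (fun i => g (f ((ψ.symm (x i) : S) : M)))
            = fun i => ((ψ.symm (x i) : S) : M) := funext fun i => gfid _
        rwa [this] at h8
      have h10 : RelMap (M := S) r (fun i => ψ.symm (x i)) := h9
      have h11 := (ψ.map_rel r (fun i => ψ.symm (x i))).2 h10
      have h12 : ((ψ : S → ULift.{w} (Fin k)) ∘ fun i => ψ.symm (x i)) = x := by
        funext i
        exact ψ.apply_symm_apply (x i)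
      rwa [h12] at h11
    have hinj : Function.Injective (h : ULift.{w} (Fin k) → C) := by
      intro x y hxy
      have hx1 : f ((ψ.symm x : S) : M) = eC (h x) := by
        rw [hfval (ψ.symm x), FirstOrder.Language.Equiv.apply_symm_apply]
      have hy1 : f ((ψ.symm y : S) : M) = eC (h y) := by
        rw [hfval (ψ.symm y), FirstOrder.Language.Equiv.apply_symm_apply]
      have : f ((ψ.symm x : S) : M) = f ((ψ.symm y : S) : M) := by
        rw [hx1, hy1, hxy]
      have h2 : ((ψ.symm x : S) : M) = ((ψ.symm y : S) : M) := by
        rw [← gfid (ψ.symm x), ← gfid (ψ.symm y), this]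
      have h3 : (ψ.symm x : S) = ψ.symm y := Subtype.ext h2
      have := congrArg ψ h3
      rwa [FirstOrder.Language.Equiv.apply_symm_apply, FirstOrder.Language.Equiv.apply_symm_apply] at this
    exact ⟨⟨⟨h, hinj⟩, fun {m} F => isEmptyElim F,
      fun {m} r x => ⟨hreflect r x, fun hx => h.map_rel r x hx⟩⟩, fun x => rfl⟩
  · -- homomorphism from A to B
    obtain ⟨f₀, hf₀⟩ := hb
    have hf₀' : ∀ i, f₀ (abar i) = b i := fun i => congrFun hf₀ i
    have hmem : ∀ a : A, f₀ (e a) ∈ S := by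
      intro a
      refine ⟨ε a, ?_⟩
      rw [← hf₀' (ε a)]
      simp [habar]
    refine ⟨⟨fun a => ψ ⟨f₀ (e a), hmem a⟩, fun {m} F => isEmptyElim F, ?_⟩⟩
    intro m r x hx
    have h1 : RelMap r (fun i => e (x i)) := (e.map_rel r x).2 hx
    have h2 : RelMap r (fun i => f₀ (e (x i))) := f₀.map_rel r _ h1
    have h3 : RelMap (M := S) r (fun i => (⟨f₀ (e (x i)), hmem (x i)⟩ : S)) := h2
    have h4 := (ψ.map_rel r (fun i => (⟨f₀ (e (x i)), hmem (x i)⟩ : S))).2 h3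
    exact h4
end

section
/- Every countable weakly oligomorphic homomorphism-homogeneous relational structure A has a core C with Age(C) = C_A. -/
open FirstOrder FirstOrder.Language FirstOrder.Language.Structure CategoryTheory

universe u v w w' w'' w'''

namespace Stmt11Aux

open Set

variable {L : FirstOrder.Language.{u, v}} {M : Type w'} [L.Structure M]

/-- In a relational language, any set carries a substructure. -/
def relSub [L.IsRelational] (s : Set M) : L.Substructure M where
  carrier := s
  fun_mem := fun {n} f => isEmptyElim f

/-- A finite set is minimal if for every endomorphism there is an endomorphism undoing it
pointwise on the set. -/
def MinS (L : FirstOrder.Language.{u, v}) (M : Type w') [L.Structure M] (s : Set M) : Prop :=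
  ∀ f : M →[L] M, ∃ e : M →[L] M, ∀ x ∈ s, e (f x) = x

lemma MinS.mono {s t : Set M} (h : MinS L M t) (hst : s ⊆ t) : MinS L M s := fun f =>
  let ⟨e, he⟩ := h f; ⟨e, fun x hx => he x (hst hx)⟩

lemma MinS.image {s : Set M} (h : MinS L M s) (g : M →[L] M) : MinS L M (⇑g '' s) := by
  intro f
  obtain ⟨e, he⟩ := h (f.comp g)
  refine ⟨g.comp e, ?_⟩
  rintro y ⟨x, hx, rfl⟩
  have h1 := he x hx
  simp only [Hom.comp_apply] at h1 ⊢
  rw [h1]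

lemma exists_minS (hwo : WeaklyOligomorphic L M) {s : Set M} (hs : s.Finite) :
    ∃ t : M →[L] M, MinS L M (⇑t '' s) := by
  classical
  obtain ⟨n, abar, hinj, hrange⟩ := hs.fin_param
  set orb : (Fin n → M) → Set (Fin n → M) := fun c => {b | ∃ f : M →[L] M, ⇑f ∘ c = b} with horb
  have orb_inv : ∀ c, orb c ∈ {ρ : Set (Fin n → M) | ∀ f : M →[L] M, ∀ a ∈ ρ, ⇑f ∘ a ∈ ρ} := by
    rintro c f b ⟨g, rfl⟩
    exact ⟨f.comp g, by ext i; simp [Hom.comp_apply, Function.comp]⟩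
  set O : Set (Set (Fin n → M)) := {ρ | ∃ f : M →[L] M, ρ = orb (⇑f ∘ abar)} with hO
  have hOfin : O.Finite := (hwo n).subset (by rintro ρ ⟨f, rfl⟩; exact orb_inv _)
  have hOne : O.Nonempty := ⟨orb (⇑(Hom.id L M) ∘ abar), ⟨Hom.id L M, rfl⟩⟩
  obtain ⟨ρ, hρO, hmin'⟩ := Set.Finite.exists_minimalFor id O hOfin hOne
  have hmin : ∀ ρ' ∈ O, id ρ' ≤ id ρ → id ρ = id ρ' := fun ρ' h1 h2 => le_antisymm (hmin' h1 h2) h2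
  obtain ⟨t0, rfl⟩ := hρO
  refine ⟨t0, ?_⟩
  intro f
  have h1 : orb (⇑(f.comp t0) ∘ abar) ∈ O := ⟨f.comp t0, rfl⟩
  have hcomp : ⇑(f.comp t0) ∘ abar = ⇑f ∘ (⇑t0 ∘ abar) := by
    ext i; simp [Hom.comp_apply, Function.comp]
  have h2 : orb (⇑(f.comp t0) ∘ abar) ⊆ orb (⇑t0 ∘ abar) := by
    rintro b ⟨g, rfl⟩
    refine ⟨g.comp f, ?_⟩
    ext i; simp [Hom.comp_apply, Function.comp]
  have heq : orb (⇑t0 ∘ abar) = orb (⇑(f.comp t0) ∘ abar) := hmin _ h1 h2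
  have hmem : (⇑t0 ∘ abar) ∈ orb (⇑(f.comp t0) ∘ abar) := by
    rw [← heq]
    exact ⟨Hom.id L M, by ext i; simp⟩
  obtain ⟨e, he⟩ := hmem
  refine ⟨e, ?_⟩
  rintro y ⟨x, hx, rfl⟩
  rw [← hrange] at hx
  obtain ⟨i, rfl⟩ := hx
  have h3 := congrFun he i
  simpa [Hom.comp_apply, Function.comp] using h3

section Chain

variable (hwo : WeaklyOligomorphic L M) (a : ℕ → M)

/-- One step of the construction: compose with maps making the image of one more point
minimal, while fixing the previous images. -/
noncomputable def stepFun (n : ℕ)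
    (p : {h : M →[L] M // MinS L M (⇑h '' (a '' Set.Iic n))}) :
    {h : M →[L] M // MinS L M (⇑h '' (a '' Set.Iic (n + 1))) ∧
      ∀ x ∈ a '' Set.Iic n, h x = p.1 x} := by
  have hs1 : (⇑p.1 '' (a '' Set.Iic (n + 1))).Finite :=
    (((Set.finite_Iic (n + 1)).image a).image _)
  set t : M →[L] M := Classical.choose (exists_minS hwo hs1) with ht
  have htmin : MinS L M (⇑t '' (⇑p.1 '' (a '' Set.Iic (n + 1)))) :=
    Classical.choose_spec (exists_minS hwo hs1)
  set e : M →[L] M := Classical.choose (p.2 t) with he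
  have hespec : ∀ x ∈ ⇑p.1 '' (a '' Set.Iic n), e (t x) = x := Classical.choose_spec (p.2 t)
  refine ⟨e.comp (t.comp p.1), ?_, ?_⟩
  · have himg : ⇑(e.comp (t.comp p.1)) '' (a '' Set.Iic (n + 1)) =
        ⇑e '' (⇑t '' (⇑p.1 '' (a '' Set.Iic (n + 1)))) := by
      simp only [Set.image_image, Hom.comp_apply]
    rw [himg]
    exact htmin.image e
  · intro x hx
    have h1 : e (t (p.1 x)) = p.1 x := hespec _ (Set.mem_image_of_mem _ hx)
    simpa [Hom.comp_apply] using h1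

/-- The chain of endomorphisms. -/
noncomputable def chain : ∀ n : ℕ, {h : M →[L] M // MinS L M (⇑h '' (a '' Set.Iic n))} :=
  fun n => Nat.rec
    ⟨Classical.choose (exists_minS hwo ((Set.finite_Iic 0).image a)),
      Classical.choose_spec (exists_minS hwo ((Set.finite_Iic 0).image a))⟩
    (fun n p => ⟨(stepFun hwo a n p).1, (stepFun hwo a n p).2.1⟩) n

lemma chain_succ_agree (n : ℕ) :
    ∀ x ∈ a '' Set.Iic n, (chain hwo a (n + 1)).1 x = (chain hwo a n).1 x :=
  (stepFun hwo a n (chain hwo a n)).2.2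

lemma chain_agree_le {n m : ℕ} (hnm : n ≤ m) :
    ∀ x ∈ a '' Set.Iic n, (chain hwo a m).1 x = (chain hwo a n).1 x := by
  induction m, hnm using Nat.le_induction with
  | base => intro x _; rfl
  | succ m hm ih =>
    intro x hx
    have hx' : x ∈ a '' Set.Iic m :=
      Set.image_mono (f := a) (Set.Iic_subset_Iic.2 hm) hx
    rw [chain_succ_agree hwo a m x hx', ih x hx]

variable {a}

lemma chain_mem_agree {n m : ℕ} (hnm : n ≤ m) {x : M} (hx : x ∈ a '' Set.Iic n) :
    (chain hwo a m).1 x = (chain hwo a n).1 x := chain_agree_le hwo a hnm x hx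

/-- The limit function of the chain. -/
noncomputable def limFun (ha : Function.Surjective a) : M → M :=
  fun x => (chain hwo a (Classical.choose (ha x))).1 x

lemma mem_iic_choose (ha : Function.Surjective a) (x : M) :
    x ∈ a '' Set.Iic (Classical.choose (ha x)) :=
  ⟨Classical.choose (ha x), Set.mem_Iic.2 le_rfl, Classical.choose_spec (ha x)⟩

lemma limFun_eq (ha : Function.Surjective a) {n : ℕ} {x : M} (hx : x ∈ a '' Set.Iic n) :
    limFun hwo ha x = (chain hwo a n).1 x := by
  set k := Classical.choose (ha x) with hk
  have h1 : x ∈ a '' Set.Iic k := mem_iic_choose ha x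
  have h2 : (chain hwo a (max k n)).1 x = (chain hwo a k).1 x :=
    chain_mem_agree hwo (le_max_left k n) h1
  have h3 : (chain hwo a (max k n)).1 x = (chain hwo a n).1 x :=
    chain_mem_agree hwo (le_max_right k n) hx
  show (chain hwo a k).1 x = (chain hwo a n).1 x
  rw [← h2, h3]

variable [L.IsRelational]

/-- The limit endomorphism. -/
noncomputable def limHom (ha : Function.Surjective a) : M →[L] M where
  toFun := limFun hwo ha
  map_fun' := fun {n} f => isEmptyElim f
  map_rel' := by
    intro n r x hx
    classical
    set N : ℕ := Finset.univ.sup fun i => Classical.choose (ha (x i)) with hN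
    have hxa : ∀ i, x i ∈ a '' Set.Iic N := fun i =>
      ⟨Classical.choose (ha (x i)),
        Set.mem_Iic.2 (by rw [hN]; exact Finset.le_sup (f := fun i => Classical.choose (ha (x i))) (Finset.mem_univ i)),
        Classical.choose_spec (ha (x i))⟩
    have heq : (limFun hwo ha) ∘ x = ⇑(chain hwo a N).1 ∘ x :=
      funext fun i => limFun_eq hwo ha (hxa i)
    show RelMap r ((limFun hwo ha) ∘ x)
    rw [heq]
    exact (chain hwo a N).1.map_rel r x hx

end Chain

/-- Existence of a substructure admitting a retraction-like endomorphism and all of whose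
finite subsets are minimal. -/
lemma exists_good_substructure [L.IsRelational] [Countable M] (hwo : WeaklyOligomorphic L M) :
    ∃ C : L.Substructure M, (∃ h : M →[L] M, ∀ x, h x ∈ C) ∧
      ∀ s : Set M, s ⊆ ↑C → s.Finite → MinS L M s := by
  rcases isEmpty_or_nonempty M with hM | hM
  · exact ⟨⊥, ⟨Hom.id L M, fun x => isEmptyElim x⟩,
      fun s _ _ f => ⟨Hom.id L M, fun x _ => isEmptyElim x⟩⟩
  · obtain ⟨a, ha⟩ := exists_surjective_nat M
    refine ⟨relSub (Set.range (limFun hwo ha)),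
      ⟨limHom hwo ha, fun x => Set.mem_range_self x⟩, ?_⟩
    intro s hsub hfin
    have key : s ⊆ Set.range (limFun hwo ha) →
        ∃ N, s ⊆ ⇑(chain hwo a N).1 '' (a '' Set.Iic N) := by
      refine Set.Finite.induction_on s hfin ?_ ?_
      · exact fun _ => ⟨0, Set.empty_subset _⟩
      · intro y s hys hsfin ih hsub'
        obtain ⟨N, hN⟩ := ih fun z hz => hsub' (Set.mem_insert_of_mem _ hz)
        have hy : y ∈ Set.range (limFun hwo ha) := hsub' (Set.mem_insert _ _)
        obtain ⟨x, hx⟩ := hy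
        set k := Classical.choose (ha x) with hk
        have hxk : x ∈ a '' Set.Iic k := mem_iic_choose ha x
        refine ⟨max N k, ?_⟩
        rintro z (rfl | hz)
        · refine ⟨x, Set.image_mono (f := a) (Set.Iic_subset_Iic.2 (le_max_right N k)) hxk, ?_⟩
          rw [chain_mem_agree hwo (le_max_right N k) hxk, ← limFun_eq hwo ha hxk, hx]
        · obtain ⟨w, hw, rfl⟩ := hN hz
          refine ⟨w, Set.image_mono (f := a) (Set.Iic_subset_Iic.2 (le_max_left N k)) hw, ?_⟩
          exact chain_mem_agree hwo (le_max_left N k) hw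
    obtain ⟨N, hN⟩ := key hsub
    exact ((chain hwo a N).2).mono hN

section Core

variable [L.IsRelational]

/-- Extend a relation-preserving map on a finite set to an endomorphism, using
homomorphism-homogeneity. -/
lemma extend_from_set (hhh : HomHomogeneous L M) {s : Set M} (hs : s.Finite) (phi : M → M)
    (hrel : ∀ {n : ℕ} (r : L.Relations n) (x : Fin n → M),
      (∀ i, x i ∈ s) → RelMap r x → RelMap r (phi ∘ x)) :
    ∃ g : M →[L] M, ∀ x ∈ s, g x = phi x := by
  let f : relSub (L := L) s →[L] M :=
    { toFun := fun x => phi ↑x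
      map_fun' := fun {n} F => isEmptyElim F
      map_rel' := fun {n} r x h => hrel r (fun i => ↑(x i)) (fun i => (x i).2) h }
  obtain ⟨g, hg⟩ := hhh (relSub s) hs f
  exact ⟨g, fun x hx => hg ⟨x, hx⟩⟩

/-- Build an embedding from an injective, relation-reflecting homomorphism (in a relational
language). -/
def embOfParts {A : Type*} {B : Type*} [L.Structure A] [L.Structure B] (f : A →[L] B)
    (hinj : Function.Injective ⇑f)
    (hrefl : ∀ {n : ℕ} (r : L.Relations n) (x : Fin n → A), RelMap r (⇑f ∘ x) → RelMap r x) :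
    A ↪[L] B where
  toFun := ⇑f
  inj' := hinj
  map_fun' := fun {n} F => isEmptyElim F
  map_rel' := fun {n} r x => ⟨hrefl r x, fun h => f.map_rel r x h⟩

lemma isHomEmbedding_of_parts {A : Type*} {B : Type*} [L.Structure A] [L.Structure B]
    (f : A →[L] B) (hinj : Function.Injective ⇑f)
    (hrefl : ∀ {n : ℕ} (r : L.Relations n) (x : Fin n → A), RelMap r (⇑f ∘ x) → RelMap r x) :
    IsHomEmbedding f :=
  ⟨embOfParts f hinj hrefl, fun _ => rfl⟩

variable {C : L.Substructure M}

/-- Key extension: an endomorphism of `C` can be partially inverted on any finite subset. -/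
lemma exists_inverter (hhh : HomHomogeneous L M)
    (hmin : ∀ s : Set M, s ⊆ ↑C → s.Finite → MinS L M s)
    (f : C →[L] C) {s : Set M} (hs : s.Finite) (hsub : s ⊆ ↑C) :
    ∃ e : M →[L] M, ∀ c : C, ↑c ∈ s → e ↑(f c) = ↑c := by
  classical
  set phi : M → M := fun m => if h : m ∈ C then ↑(f ⟨m, h⟩) else m with hphi
  have hrel : ∀ {n : ℕ} (r : L.Relations n) (x : Fin n → M),
      (∀ i, x i ∈ s) → RelMap r x → RelMap r (phi ∘ x) := by
    intro n r x hx hR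
    have hxC : ∀ i, x i ∈ C := fun i => hsub (hx i)
    have hR' : RelMap r (fun i => (⟨x i, hxC i⟩ : C)) := hR
    have hR2 := f.map_rel r _ hR'
    have heq : phi ∘ x = fun i => ((f ⟨x i, hxC i⟩ : C) : M) :=
      funext fun i => dif_pos (hxC i)
    rw [heq]
    exact hR2
  obtain ⟨g, hg⟩ := extend_from_set hhh hs phi hrel
  obtain ⟨e, he⟩ := hmin s hsub hs g
  refine ⟨e, fun c hc => ?_⟩
  have h1 : g ↑c = ↑(f c) := by rw [hg ↑c hc, hphi]; simp [dif_pos c.2]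
  have h2 := he ↑c hc
  rw [h1] at h2
  exact h2

lemma isCore_of_minS (hhh : HomHomogeneous L M)
    (hmin : ∀ s : Set M, s ⊆ ↑C → s.Finite → MinS L M s) : IsCore L C := by
  intro f
  have hinj : Function.Injective ⇑f := by
    intro x y hxy
    obtain ⟨e, he⟩ := exists_inverter hhh hmin f
      (Set.Finite.insert (↑x) (Set.finite_singleton (↑y : M)))
      (by rintro z (rfl | rfl); exacts [x.2, y.2])
    have h1 := he x (Set.mem_insert _ _)
    have h2 := he y (Set.mem_insert_of_mem _ rfl)
    rw [hxy] at h1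
    rw [h1] at h2
    exact Subtype.ext h2
  have hrefl : ∀ {n : ℕ} (r : L.Relations n) (x : Fin n → C),
      RelMap r (⇑f ∘ x) → RelMap r x := by
    intro n r x hR
    obtain ⟨e, he⟩ := exists_inverter hhh hmin f
      (Set.finite_range fun i => ((x i : M)))
      (by rintro z ⟨i, rfl⟩; exact (x i).2)
    have hR1 : RelMap r (fun i => ((f (x i) : C) : M)) := hR
    have hR2 := e.map_rel r _ hR1
    have heq : ⇑e ∘ (fun i => ((f (x i) : C) : M)) = fun i => ((x i : C) : M) :=
      funext fun i => he (x i) ⟨i, rfl⟩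
    rw [heq] at hR2
    exact hR2
  exact isHomEmbedding_of_parts f hinj hrefl

lemma age_subset_CA (hhh : HomHomogeneous L M)
    (hmin : ∀ s : Set M, s ⊆ ↑C → s.Finite → MinS L M s) :
    Age.{u, v, w, w'} L C ⊆ CA.{u, v, w, w'} L M := by
  classical
  rintro N ⟨hNfin, ⟨emb⟩⟩
  refine ⟨⟨hNfin, ⟨C.subtype.comp emb⟩⟩, ?_⟩
  rintro B ⟨hBfin, ⟨j⟩⟩ f
  set iota : N ↪[L] M := C.subtype.comp emb with hiota
  have hsul : Set.range ⇑iota ⊆ ↑C := by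
    rintro _ ⟨q, rfl⟩
    exact (emb q).2
  have hsf : (Set.range ⇑iota).Finite := Set.finite_range _
  set phi : M → M := fun m => if h : ∃ q, iota q = m then ↑(j (f (Classical.choose h))) else m
    with hphi
  have hrel : ∀ {n : ℕ} (r : L.Relations n) (x : Fin n → M),
      (∀ i, x i ∈ Set.range ⇑iota) → RelMap r x → RelMap r (phi ∘ x) := by
    intro n r x hx hR
    have hch : ∀ i, iota (Classical.choose (hx i)) = x i := fun i => Classical.choose_spec (hx i)
    have hRN : RelMap r fun i => Classical.choose (hx i) := by
      refine (iota.map_rel r _).1 ?_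
      have : ⇑iota ∘ (fun i => Classical.choose (hx i)) = x := funext hch
      rw [this]
      exact hR
    have hRB := f.map_rel r _ hRN
    have hRM := (j.map_rel r _).2 hRB
    have heq : phi ∘ x = ⇑j ∘ (⇑f ∘ fun i => Classical.choose (hx i)) :=
      funext fun i => dif_pos (hx i)
    rw [heq]
    exact hRM
  obtain ⟨g, hg⟩ := extend_from_set hhh hsf phi hrel
  obtain ⟨e, he⟩ := hmin _ hsul hsf g
  have hge : ∀ q : N, g (iota q) = j (f q) := by
    intro q
    have hm : iota q ∈ Set.range ⇑iota := ⟨q, rfl⟩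
    rw [hg _ hm]
    have hq : ∃ q', iota q' = iota q := ⟨q, rfl⟩
    show (if h : ∃ q', iota q' = iota q then (↑(j (f (Classical.choose h))) : M)
      else iota q) = ↑(j (f q))
    rw [dif_pos hq]
    have : Classical.choose hq = q := iota.injective (Classical.choose_spec hq)
    rw [this]
  have hea : ∀ q : N, e (j (f q)) = iota q := fun q => by
    rw [← hge q]; exact he _ ⟨q, rfl⟩
  have hinj : Function.Injective ⇑f := by
    intro q q' hq
    apply iota.injective
    rw [← hea q, ← hea q', hq]
  have hrefl : ∀ {n : ℕ} (r : L.Relations n) (x : Fin n → N),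
      RelMap r (⇑f ∘ x) → RelMap r x := by
    intro n r x hR
    have h1 : RelMap r (⇑j ∘ (⇑f ∘ x)) := (j.map_rel r _).2 hR
    have h2 := e.map_rel r _ h1
    have h3 : ⇑e ∘ (⇑j ∘ (⇑f ∘ x)) = ⇑iota ∘ x := funext fun i => hea (x i)
    rw [h3] at h2
    exact (iota.map_rel r x).1 h2
  exact isHomEmbedding_of_parts f hinj hrefl

lemma CA_subset_age (ha : ∃ h : M →[L] M, ∀ x, h x ∈ C) :
    CA.{u, v, w, w'} L M ⊆ Age.{u, v, w, w'} L C := by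
  classical
  rintro N ⟨⟨hNfin, ⟨j⟩⟩, hirr⟩
  obtain ⟨h, hh⟩ := ha
  refine ⟨hNfin, ?_⟩
  set f0 : N →[L] M := h.comp j.toHom with hf0
  set D : L.Substructure M := relSub (Set.range ⇑f0) with hD
  have hDfin : (Set.range ⇑f0).Finite := Set.finite_range _
  haveI hDf : Finite D := hDfin.to_subtype
  haveI : Fintype D := Fintype.ofFinite D
  let eqv : D ≃ ULift.{w} (Fin (Fintype.card D)) :=
    (Fintype.equivFin D).trans Equiv.ulift.symm
  letI st : L.Structure (ULift.{w} (Fin (Fintype.card D))) := _root_.Equiv.inducedStructure eqv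
  let iso : D ≃[L] ULift.{w} (Fin (Fintype.card D)) := _root_.Equiv.inducedStructureEquiv eqv
  let B : Bundled.{w} L.Structure := ⟨ULift.{w} (Fin (Fintype.card D)), st⟩
  have hB : B ∈ Age.{u, v, w, w'} L M :=
    ⟨Finite.of_equiv D eqv, ⟨D.subtype.comp iso.symm.toEmbedding⟩⟩
  let f1 : N →[L] D :=
    { toFun := fun q => ⟨f0 q, Set.mem_range_self q⟩
      map_fun' := fun {n} F => isEmptyElim F
      map_rel' := fun {n} r x hR => f0.map_rel r x hR }
  let f2 : N →[L] B := iso.toHom.comp f1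
  obtain ⟨e2, _⟩ := hirr B hB f2
  have hDC : Set.range ⇑f0 ⊆ ↑C := by
    rintro _ ⟨q, rfl⟩
    exact hh (j q)
  let incl : D ↪[L] C :=
    { toFun := fun x => ⟨↑x, hDC x.2⟩
      inj' := fun {x y} hxy => by
        have h' : ((⟨(x : M), hDC x.2⟩ : C) : M) = ((⟨(y : M), hDC y.2⟩ : C) : M) :=
          congrArg Subtype.val hxy
        exact Subtype.ext h'
      map_fun' := fun {n} F => isEmptyElim F
      map_rel' := fun {n} r x => Iff.rfl }
  exact ⟨incl.comp (iso.symm.toEmbedding.comp e2)⟩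

lemma age_eq (hhh : HomHomogeneous L M) (ha : ∃ h : M →[L] M, ∀ x, h x ∈ C)
    (hmin : ∀ s : Set M, s ⊆ ↑C → s.Finite → MinS L M s) :
    Age.{u, v, w, w'} L C = CA.{u, v, w, w'} L M :=
  Set.Subset.antisymm (age_subset_CA hhh hmin) (CA_subset_age ha)

end Core

end Stmt11Aux

/-- Every countable weakly oligomorphic homomorphism-homogeneous structure `M`
has a core `C` with `Age C = C_M`. -/
theorem stmt11 (L : FirstOrder.Language.{u, v}) [L.IsRelational]
    (M : Type w') [L.Structure M] [Countable M]
    (hwo : WeaklyOligomorphic L M) (hhh : HomHomogeneous L M) :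
    ∃ C : L.Substructure M, IsCoreOf L M C ∧
      Age.{u, v, w, w'} L C = CA.{u, v, w, w'} L M := by
  obtain ⟨C, ha, hmin⟩ := Stmt11Aux.exists_good_substructure hwo
  exact ⟨C, ⟨Stmt11Aux.isCore_of_minS hhh hmin, ha⟩, Stmt11Aux.age_eq hhh ha hmin⟩
end
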